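/- arXiv:2302.01815 — 8 statements merged into one kernel-verified Lean document; each statement's English description precedes it below -/
import Mathlib

section
/- Let I1 and I2 be two MM instances with the same students, schools, preference lists and priority orders, whose capacity functions q1 and q2 satisfy q1(w) ≤ q2(w) for every school w. Let μ1 and μ2 be the student-optimal stable matchings of I1 and I2, respectively. Then every student weakly prefers μ2 to μ1: for each student u, either μ2(u) = μ1(u), or u is matched under μ2 and (u is unmatched under μ1 or u prefers μ2(u) to μ1(u)). -/
/-!
Basic framework for many-to-one matching (MM) instances with two-sided
preferences, following the paper "Optimal Capacity Modification for
Many-to-One Matching Problems".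

Preference/priority orders are encoded by rank functions (`rkS`, `rkW`):
a smaller rank means more preferred; ranks are required to be injective
on the respective sets of acceptable partners.
-/

structure MM (U W : Type*) [Fintype U] [Fintype W] [DecidableEq U] [DecidableEq W] where
  /-- acceptable schools of a student -/
  accS : U → Finset W
  /-- students on a school's priority list -/
  accW : W → Finset U
  /-- every student has a nonempty preference list -/
  acc_ne : ∀ u, (accS u).Nonempty
  /-- mutual acceptability -/
  acc_iff : ∀ u w, u ∈ accW w ↔ w ∈ accS u
  /-- rank of a school in a student's list (smaller = better) -/
  rkS : U → W → ℕ
  /-- rank of a student in a school's priority list (smaller = better) -/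
  rkW : W → U → ℕ
  rkS_inj : ∀ u, ∀ w1 ∈ accS u, ∀ w2 ∈ accS u, rkS u w1 = rkS u w2 → w1 = w2
  rkW_inj : ∀ w, ∀ u1 ∈ accW w, ∀ u2 ∈ accW w, rkW w u1 = rkW w u2 → u1 = u2
  /-- capacities -/
  q : W → ℕ
  q_pos : ∀ w, 1 ≤ q w

namespace MM

variable {U W : Type*} [Fintype U] [Fintype W] [DecidableEq U] [DecidableEq W]

/-- `μ` is a (partial) matching: it assigns only acceptable schools. -/
def IsMatching (I : MM U W) (μ : U → Option W) : Prop :=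
  ∀ u w, μ u = some w → w ∈ I.accS u

/-- the set of students assigned to school `w` -/
def assignedTo (μ : U → Option W) (w : W) : Set U := {u | μ u = some w}

/-- the number of students assigned to school `w` -/
noncomputable def load (μ : U → Option W) (w : W) : ℕ := (assignedTo μ w).ncard

/-- `μ` is feasible: it is a matching respecting all capacities. -/
def Feasible (I : MM U W) (μ : U → Option W) : Prop :=
  I.IsMatching μ ∧ ∀ w, load μ w ≤ I.q w

/-- `μ` is perfect: every student is matched. -/
def Perfect (μ : U → Option W) : Prop := ∀ u, μ u ≠ none

/-- student `u` strictly prefers school `w` to the outcome `o`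
(where `o = none` means being unmatched) -/
def PrefOut (I : MM U W) (u : U) (w : W) (o : Option W) : Prop :=
  o = none ∨ ∃ w', o = some w' ∧ I.rkS u w < I.rkS u w'

/-- `(u,w)` is a blocking pair of `μ` -/
def Blocks (I : MM U W) (μ : U → Option W) (u : U) (w : W) : Prop :=
  u ∈ I.accW w ∧ I.PrefOut u w (μ u) ∧
    (load μ w < I.q w ∨ ∃ u' ∈ assignedTo μ w, I.rkW w u < I.rkW w u')

/-- `μ` is stable: feasible and with no blocking pair -/
def Stable (I : MM U W) (μ : U → Option W) : Prop :=
  I.Feasible μ ∧ ∀ u w, ¬ I.Blocks μ u w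

/-- student `u` is strictly better off under `μ` than under `σ` -/
def Better (I : MM U W) (u : U) (μ σ : U → Option W) : Prop :=
  ∃ w, μ u = some w ∧ I.PrefOut u w (σ u)

/-- student `u` weakly prefers `μ` to `σ` -/
def WeakPref (I : MM U W) (u : U) (μ σ : U → Option W) : Prop :=
  μ u = σ u ∨ I.Better u μ σ

/-- `μ` dominates `σ` -/
def Dominates (I : MM U W) (μ σ : U → Option W) : Prop :=
  (∀ u, I.WeakPref u μ σ) ∧ ∃ u, I.Better u μ σ

/-- `μ` is (Pareto-)efficient: feasible and dominated by no feasible matching -/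
def Efficient (I : MM U W) (μ : U → Option W) : Prop :=
  I.Feasible μ ∧ ∀ σ, I.Feasible σ → ¬ I.Dominates σ μ

/-- `μ` is a student-optimal stable matching -/
def StudentOptimal (I : MM U W) (μ : U → Option W) : Prop :=
  I.Stable μ ∧ ∀ σ, I.Stable σ → ∀ u, I.WeakPref u μ σ

/-- increase capacities by the vector `r` -/
def incCap (I : MM U W) (r : W → ℕ) : MM U W :=
  { I with
    q := fun w => I.q w + r w
    q_pos := fun w => le_trans (I.q_pos w) (Nat.le_add_right _ _) }

/-- replace the capacities by `q'` -/
def withCap (I : MM U W) (q' : W → ℕ) (hq' : ∀ w, 1 ≤ q' w) : MM U W :=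
  { I with
    q := q'
    q_pos := hq' }

/-- student `x` justifiedly envies student `y` under `σ` -/
def JEnvy (I : MM U W) (σ : U → Option W) (x y : U) : Prop :=
  ∃ w, σ y = some w ∧ x ∈ I.accW w ∧ I.rkW w x < I.rkW w y ∧ I.PrefOut x w (σ x)

/-- the set of students unmatched under `μ` -/
def unmatchedSet (μ : U → Option W) : Set U := {u | μ u = none}

/-- `v` is an assignment vector: it assigns to each student unmatched
under `μhat` an acceptable school -/
def IsAsgVec (I : MM U W) (μhat : U → Option W) (v : U → W) : Prop :=
  ∀ u, μhat u = none → v u ∈ I.accS u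

/-- `μhat + v` : additionally match every unmatched student `u` to `v u` -/
def extend (μhat : U → Option W) (v : U → W) : U → Option W :=
  fun u => some ((μhat u).getD (v u))

/-- JE(v): the assigned students who justifiedly envy some unassigned student
under `μhat + v` -/
def JEset (I : MM U W) (μhat : U → Option W) (v : U → W) : Set U :=
  {x | μhat x ≠ none ∧ ∃ y, μhat y = none ∧ I.JEnvy (extend μhat v) x y}

/-- `n_je(v)` -/
noncomputable def nje (I : MM U W) (μhat : U → Option W) (v : U → W) : ℕ :=
  (I.JEset μhat v).ncard

end MM


/-!
The matching `μ1` stays feasible when capacities grow, and it has no justified envy under the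
new capacities either, since justified envy does not involve capacities. Among the envy-free
feasible matchings that every student weakly prefers to `μ1`, take one that no other such
matching dominates. It is stable: a blocking pair would have to use an empty seat, and giving
that seat to the claimant with the highest priority creates no justified envy and improves the
matching. The student-optimal stable matching `μ2` is then weakly preferred to it, and so to `μ1`.
-/

namespace MM

section Assignment

variable {U W : Type*} [DecidableEq U] {ν : U → Option W} {u : U} {w : W}

lemma assignedTo_update_subset (w' : W) :
    assignedTo (Function.update ν u (some w)) w' ⊆ insert u (assignedTo ν w') := by
  intro x hx
  by_cases hxu : x = u
  · exact Or.inl hxu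
  · right
    change Function.update ν u (some w) x = some w' at hx
    rwa [Function.update_of_ne hxu] at hx

lemma assignedTo_update_subset_of_ne {w' : W} (hw' : w' ≠ w) :
    assignedTo (Function.update ν u (some w)) w' ⊆ assignedTo ν w' := by
  intro x hx
  rcases assignedTo_update_subset w' hx with rfl | hx
  · change Function.update ν x (some w) x = some w' at hx
    rw [Function.update_self, Option.some_inj] at hx
    exact absurd hx.symm hw'
  · exact hx

end Assignment

variable {U W : Type*} [Fintype U] [Fintype W] [DecidableEq U] [DecidableEq W]

def EnvyFree (I : MM U W) (μ : U → Option W) : Prop :=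
  ∀ x y, ¬ I.JEnvy μ x y

section Preferences

variable {I : MM U W} {u : U} {w w' : W} {o : Option W} {μ σ τ : U → Option W}

lemma prefOut_some_iff : I.PrefOut u w (some w') ↔ I.rkS u w < I.rkS u w' := by
  simp [PrefOut]

lemma not_prefOut_some_self : ¬ I.PrefOut u w (some w) := by
  simp [prefOut_some_iff]

lemma PrefOut.of_rkS_lt (hlt : I.rkS u w < I.rkS u w') (h : I.PrefOut u w' o) :
    I.PrefOut u w o := by
  rcases h with h | ⟨w'', rfl, hlt'⟩
  · exact Or.inl h
  · exact Or.inr ⟨w'', rfl, hlt.trans hlt'⟩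

lemma not_better_self : ¬ I.Better u μ μ := by
  rintro ⟨w, hw, h⟩
  rw [hw] at h
  exact not_prefOut_some_self h

lemma Better.trans (h₁ : I.Better u μ σ) (h₂ : I.Better u σ τ) : I.Better u μ τ := by
  obtain ⟨w, hw, h₁⟩ := h₁
  obtain ⟨w', hσ, h₂⟩ := h₂
  rw [hσ, prefOut_some_iff] at h₁
  exact ⟨w, hw, h₂.of_rkS_lt h₁⟩

lemma WeakPref.trans (h₁ : I.WeakPref u μ σ) (h₂ : I.WeakPref u σ τ) : I.WeakPref u μ τ := by
  rcases h₁ with h₁ | h₁ <;> rcases h₂ with h₂ | h₂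
  · exact Or.inl (h₁.trans h₂)
  · exact Or.inr (by simpa only [Better, h₁] using h₂)
  · exact Or.inr (by simpa only [Better, h₂] using h₁)
  · exact Or.inr (h₁.trans h₂)

lemma Dominates.trans (h₁ : I.Dominates μ σ) (h₂ : I.Dominates σ τ) : I.Dominates μ τ := by
  obtain ⟨u, hu⟩ := h₂.2
  exact ⟨fun v => (h₁.1 v).trans (h₂.1 v), u,
    (h₁.1 u).elim (fun h => by simpa only [Better, h] using hu) (·.trans hu)⟩

lemma not_dominates_self : ¬ I.Dominates μ μ :=
  fun ⟨_, _, h⟩ => not_better_self h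

end Preferences

lemma wellFounded_dominates (I : MM U W) : WellFounded I.Dominates :=
  haveI : IsTrans _ I.Dominates := ⟨fun _ _ _ => Dominates.trans⟩
  haveI : Std.Irrefl I.Dominates := ⟨fun _ => not_dominates_self⟩
  Finite.wellFounded_of_trans_of_irrefl _

lemma Stable.envyFree {I : MM U W} {μ : U → Option W} (h : I.Stable μ) : I.EnvyFree μ := by
  rintro x y ⟨w, hy, hx, hlt, hpref⟩
  exact h.2 x w ⟨hx, hpref, Or.inr ⟨y, hy, hlt⟩⟩

lemma stable_of_envyFree {I : MM U W} {μ : U → Option W} (hμ : I.Feasible μ)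
    (henvy : I.EnvyFree μ)
    (hfull : ∀ u w, u ∈ I.accW w → I.PrefOut u w (μ u) → I.q w ≤ load μ w) :
    I.Stable μ := by
  refine ⟨hμ, ?_⟩
  rintro u w ⟨hu, hpref, hload | ⟨y, hy, hlt⟩⟩
  · exact (hfull u w hu hpref).not_gt hload
  · exact henvy u y ⟨w, hy, hu, hlt, hpref⟩

section Update

variable {I : MM U W} {ν : U → Option W} {u : U} {w : W}

lemma feasible_update (hν : I.Feasible ν) (hw : w ∈ I.accS u) (hload : load ν w < I.q w) :
    I.Feasible (Function.update ν u (some w)) := by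
  refine ⟨fun x w' hx => ?_, fun w' => ?_⟩
  · by_cases hxu : x = u
    · subst hxu
      simp only [Function.update_self, Option.some_inj] at hx
      exact hx ▸ hw
    · exact hν.1 x w' (by simpa only [Function.update_of_ne hxu] using hx)
  · by_cases hw' : w' = w
    · subst hw'
      calc load (Function.update ν u (some w')) w'
          ≤ (insert u (assignedTo ν w')).ncard := Set.ncard_le_ncard (assignedTo_update_subset w')
        _ ≤ load ν w' + 1 := Set.ncard_insert_le _ _
        _ ≤ I.q w' := hload
    · exact (Set.ncard_le_ncard (assignedTo_update_subset_of_ne hw')).trans (hν.2 w')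

/-- Anyone envying the moved student would have been a claimant of higher priority. -/
lemma envyFree_update (henvy : I.EnvyFree ν) (hpref : I.PrefOut u w (ν u))
    (htop : ∀ x, x ∈ I.accW w → I.PrefOut x w (ν x) → I.rkW w u ≤ I.rkW w x) :
    I.EnvyFree (Function.update ν u (some w)) := by
  rintro x y ⟨w', hy, hx, hlt, hpx⟩
  by_cases hyu : y = u
  · subst hyu
    simp only [Function.update_self, Option.some_inj] at hy
    subst hy
    have hxy : x ≠ y := by
      rintro rfl
      simp only [Function.update_self] at hpx
      exact not_prefOut_some_self hpx
    rw [Function.update_of_ne hxy] at hpx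
    exact (htop x hx hpx).not_gt hlt
  · rw [Function.update_of_ne hyu] at hy
    by_cases hxu : x = u
    · subst hxu
      rw [Function.update_self, prefOut_some_iff] at hpx
      exact henvy x y ⟨w', hy, hx, hlt, hpref.of_rkS_lt hpx⟩
    · rw [Function.update_of_ne hxu] at hpx
      exact henvy x y ⟨w', hy, hx, hlt, hpx⟩

lemma dominates_update (hpref : I.PrefOut u w (ν u)) :
    I.Dominates (Function.update ν u (some w)) ν := by
  refine ⟨fun x => ?_, u, w, Function.update_self _ _ _, hpref⟩
  by_cases hxu : x = u
  · subst hxu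
    exact Or.inr ⟨w, Function.update_self _ _ _, hpref⟩
  · exact Or.inl (Function.update_of_ne hxu _ _)

lemma exists_dominates_of_claim (hν : I.Feasible ν) (henvy : I.EnvyFree ν) (hu : u ∈ I.accW w)
    (hpref : I.PrefOut u w (ν u)) (hload : load ν w < I.q w) :
    ∃ ν', I.Feasible ν' ∧ I.EnvyFree ν' ∧ I.Dominates ν' ν := by
  classical
  obtain ⟨v, hv, hvtop⟩ := (Finset.univ.filter fun x => x ∈ I.accW w ∧ I.PrefOut x w (ν x)
    ).exists_min_image (I.rkW w) ⟨u, by simp [hu, hpref]⟩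
  simp only [Finset.mem_filter, Finset.mem_univ, true_and] at hv hvtop
  exact ⟨_, feasible_update hν ((I.acc_iff v w).1 hv.1) hload,
    envyFree_update henvy hv.2 fun x hx hpx => hvtop x ⟨hx, hpx⟩, dominates_update hv.2⟩

end Update

theorem exists_stable_weakPref_of_envyFree {I : MM U W} {μ : U → Option W} (hμ : I.Feasible μ)
    (henvy : I.EnvyFree μ) : ∃ ν, I.Stable ν ∧ ∀ u, I.WeakPref u ν μ := by
  obtain ⟨ν, ⟨hν, hνenvy, hνμ⟩, hmin⟩ := I.wellFounded_dominates.has_min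
    {ν | I.Feasible ν ∧ I.EnvyFree ν ∧ ∀ u, I.WeakPref u ν μ}
    ⟨μ, hμ, henvy, fun _ => Or.inl rfl⟩
  refine ⟨ν, stable_of_envyFree hν hνenvy fun u w hu hpref => ?_, hνμ⟩
  by_contra! hload
  obtain ⟨ν', hν', hν'envy, hdom⟩ := exists_dominates_of_claim hν hνenvy hu hpref hload
  exact hmin ν' ⟨hν', hν'envy, fun v => (hdom.1 v).trans (hνμ v)⟩ hdom

theorem StudentOptimal.weakPref_of_envyFree {I : MM U W} {μ' μ : U → Option W}
    (hopt : I.StudentOptimal μ') (hμ : I.Feasible μ) (henvy : I.EnvyFree μ) (u : U) :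
    I.WeakPref u μ' μ := by
  obtain ⟨ν, hν, hνμ⟩ := exists_stable_weakPref_of_envyFree hμ henvy
  exact (hopt.2 ν hν u).trans (hνμ u)

end MM

/-- Lemma 2.4 (i): increasing capacities weakly improves all
students' outcomes in their student-optimal stable matchings. -/
theorem statement_0 {U W : Type*} [Fintype U] [Fintype W] [DecidableEq U] [DecidableEq W]
    (I1 I2 : MM U W)
    (haccS : I1.accS = I2.accS) (haccW : I1.accW = I2.accW)
    (hrkS : I1.rkS = I2.rkS) (hrkW : I1.rkW = I2.rkW)
    (hq : ∀ w, I1.q w ≤ I2.q w)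
    (μ1 μ2 : U → Option W)
    (h1 : I1.StudentOptimal μ1) (h2 : I2.StudentOptimal μ2) :
    ∀ u, I1.WeakPref u μ2 μ1 := by
  have hfeas : I2.Feasible μ1 :=
    ⟨fun x w hx => haccS ▸ h1.1.1.1 x w hx, fun w => (h1.1.1.2 w).trans (hq w)⟩
  have henvy : I2.EnvyFree μ1 := by
    simpa only [MM.EnvyFree, MM.JEnvy, MM.PrefOut, haccW, hrkW, hrkS] using h1.1.envyFree
  intro u
  simpa only [MM.WeakPref, MM.Better, MM.PrefOut, hrkS] using h2.weakPref_of_envyFree hfeas henvy u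
end

section
/- Let I1 and I2 be two MM instances with the same students, schools, preference lists and priority orders, whose capacity functions q1 and q2 satisfy q1(w) ≤ q2(w) for every school w, and let μ1 and μ2 be their student-optimal stable matchings. If a school w is under-filled in μ1, i.e., |μ1⁻¹(w)| < q1(w), then μ2⁻¹(w) ⊆ μ1⁻¹(w). -/
/-!
Let `T` be the set of students strictly better off under `μ1` than under `μ2`. If some `x ∈ T`
sits at `w` under `μ1`, then `(x, w)` does not block `μ2`, so `w` is full under `μ2` and all its
`μ2`-students outrank `x`; so any of them not at `w` under `μ1` lies in `T`, as otherwise it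
would block `μ1` together with `w`. Since `q1 w ≤ q2 w`, the school `w` therefore loses at most
as many students of `T` as it gains. At an under-filled school every newcomer lies in `T` (or it
would block `μ1`), so a newcomer there makes the gain strict. Summing over the schools counts
each student of `T` once among the leavers and at most once among the entrants, a contradiction.
-/

theorem Finset.card_inter_add_card_le_of_sdiff_subset {α : Type*} [DecidableEq α]
    {s t u : Finset α} (hdisj : Disjoint (t ∩ s) u) (hsub : u \ s ⊆ t) :
    (t ∩ s).card + u.card ≤ (t ∩ u).card + s.card := by
  have hts : t ∩ s ⊆ s \ u := fun x hx =>
    Finset.mem_sdiff.2 ⟨Finset.mem_of_mem_inter_right hx, Finset.disjoint_left.1 hdisj hx⟩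
  have hut : u \ s ⊆ t ∩ u := fun x hx =>
    Finset.mem_inter.2 ⟨hsub hx, (Finset.mem_sdiff.1 hx).1⟩
  have := Finset.card_le_card hts
  have := Finset.card_le_card hut
  have := Finset.card_sdiff_add_card_inter s u
  have := Finset.card_sdiff_add_card_inter u s
  rw [Finset.inter_comm u s] at this
  omega

namespace MM

variable {U W : Type*}

def assignedFinset [Fintype U] [DecidableEq W] (μ : U → Option W) (w : W) : Finset U :=
  {u | μ u = some w}

@[simp]
theorem mem_assignedFinset [Fintype U] [DecidableEq W] {μ : U → Option W} {w : W} {u : U} :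
    u ∈ assignedFinset μ w ↔ μ u = some w := by
  simp [assignedFinset]

theorem card_assignedFinset [Fintype U] [DecidableEq W] (μ : U → Option W) (w : W) :
    (assignedFinset μ w).card = load μ w := by
  rw [load, ← Set.ncard_coe_finset]
  congr 1
  ext u
  simp [assignedTo]

theorem card_eq_card_filter_none_add_sum_card_inter [Fintype U] [Fintype W] [DecidableEq U]
    [DecidableEq W] (s : Finset U) (μ : U → Option W) :
    s.card = (s.filter (μ · = none)).card + ∑ w, (s ∩ assignedFinset μ w).card := by
  rw [Finset.card_eq_sum_card_fiberwise (f := μ) (t := Finset.univ) fun _ _ => Finset.mem_univ _,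
    Fintype.sum_option]
  congr 1
  refine Finset.sum_congr rfl fun w _ => congrArg Finset.card ?_
  ext u
  simp

variable [Fintype U] [Fintype W] [DecidableEq U] [DecidableEq W]

theorem PrefOut.ne_some {I : MM U W} {u : U} {w : W} {o : Option W} (h : I.PrefOut u w o) :
    o ≠ some w := by
  rintro rfl
  obtain h | ⟨w', hw', hlt⟩ := h
  · exact Option.some_ne_none _ h
  · cases Option.some.inj hw'
    exact lt_irrefl _ hlt

theorem Better.prefOut {I : MM U W} {u : U} {w : W} {μ σ : U → Option W}
    (h : I.Better u μ σ) (hw : μ u = some w) : I.PrefOut u w (σ u) := by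
  obtain ⟨w', hw', hp⟩ := h
  cases Option.some.inj (hw.symm.trans hw')
  exact hp

theorem Better.ne {I : MM U W} {u : U} {μ σ : U → Option W} (h : I.Better u μ σ) :
    μ u ≠ σ u := by
  obtain ⟨w, hw, hp⟩ := h
  rw [hw]
  exact hp.ne_some.symm

theorem IsMatching.mem_accW {I : MM U W} {μ : U → Option W} (hμ : I.IsMatching μ) {u : U}
    {w : W} (hu : μ u = some w) : u ∈ I.accW w :=
  (I.acc_iff u w).2 (hμ u w hu)

theorem prefOut_of_not_better {I : MM U W} {μ σ : U → Option W} (hμ : I.IsMatching μ)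
    {y : U} {w : W} (hw : w ∈ I.accS y) (hσ : σ y = some w) (hne : μ y ≠ some w)
    (hnb : ¬ I.Better y μ σ) : I.PrefOut y w (μ y) := by
  cases hm : μ y with
  | none => exact Or.inl rfl
  | some w' =>
    refine Or.inr ⟨w', rfl, lt_of_le_of_ne ?_ fun he => ?_⟩
    · by_contra! hlt
      exact hnb ⟨w', hm, hσ ▸ Or.inr ⟨w, rfl, hlt⟩⟩
    · exact hne (hm ▸ congrArg some (I.rkS_inj y w hw w' (hμ y w' hm) he).symm)

namespace Stable

variable {I : MM U W} {μ : U → Option W}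

theorem load_eq_of_prefOut (hμ : I.Stable μ) {x : U} {w : W} (hx : x ∈ I.accW w)
    (hp : I.PrefOut x w (μ x)) : load μ w = I.q w := by
  by_contra hne
  exact hμ.2 x w ⟨hx, hp, Or.inl (lt_of_le_of_ne (hμ.1.2 w) hne)⟩

theorem rkW_lt_of_prefOut (hμ : I.Stable μ) {x : U} {w : W} (hx : x ∈ I.accW w)
    (hp : I.PrefOut x w (μ x)) {y : U} (hy : y ∈ assignedTo μ w) : I.rkW w y < I.rkW w x := by
  refine lt_of_le_of_ne (not_lt.1 fun hlt => hμ.2 x w ⟨hx, hp, Or.inr ⟨y, hy, hlt⟩⟩) ?_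
  intro he
  have hyx := I.rkW_inj w y (hμ.1.1.mem_accW hy) x hx he
  exact hp.ne_some (hyx ▸ hy)

theorem better_of_blocking (hμ : I.Stable μ) {σ : U → Option W} (hσ : I.IsMatching σ)
    {y : U} {w : W} (hy : σ y = some w) (hne : μ y ≠ some w)
    (hroom : load μ w < I.q w ∨ ∃ x ∈ assignedTo μ w, I.rkW w y < I.rkW w x) :
    I.Better y μ σ := by
  by_contra hnb
  exact hμ.2 y w
    ⟨hσ.mem_accW hy, prefOut_of_not_better hμ.1.1 (hσ y w hy) hy hne hnb, hroom⟩

end Stable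

open Classical in
noncomputable def betterOff (I : MM U W) (μ σ : U → Option W) : Finset U :=
  {u | I.Better u μ σ}

@[simp]
theorem mem_betterOff {I : MM U W} {μ σ : U → Option W} {u : U} :
    u ∈ I.betterOff μ σ ↔ I.Better u μ σ := by
  simp [betterOff]

theorem sum_card_betterOff_inter_assignedFinset (I : MM U W) (μ σ : U → Option W) :
    ∑ w, (I.betterOff μ σ ∩ assignedFinset μ w).card = (I.betterOff μ σ).card := by
  rw [card_eq_card_filter_none_add_sum_card_inter _ μ, Finset.card_eq_zero.2, zero_add]
  refine Finset.filter_eq_empty_iff.2 fun u hu hnone => ?_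
  obtain ⟨w, hw, -⟩ := mem_betterOff.1 hu
  exact Option.some_ne_none w (hw ▸ hnone)

theorem sum_card_betterOff_inter_assignedFinset_le (I : MM U W) (μ σ : U → Option W) :
    ∑ w, (I.betterOff μ σ ∩ assignedFinset σ w).card ≤ (I.betterOff μ σ).card := by
  rw [card_eq_card_filter_none_add_sum_card_inter (I.betterOff μ σ) σ]
  exact Nat.le_add_left _ _

section CapacityIncrease

variable {I : MM U W} {q' : W → ℕ} {hq' : ∀ w, 1 ≤ q' w} {μ1 μ2 : U → Option W}

theorem disjoint_betterOff_inter_assignedFinset (w : W) :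
    Disjoint (I.betterOff μ1 μ2 ∩ assignedFinset μ1 w) (assignedFinset μ2 w) := by
  refine Finset.disjoint_left.2 fun u hu hu2 => ?_
  obtain ⟨hb, hu1⟩ := Finset.mem_inter.1 hu
  exact (mem_betterOff.1 hb).ne
    ((mem_assignedFinset.1 hu1).trans (mem_assignedFinset.1 hu2).symm)

theorem load_eq_of_better (hμ1 : I.IsMatching μ1) (h2 : (I.withCap q' hq').Stable μ2) {x : U}
    {w : W} (hx : I.Better x μ1 μ2) (hw : μ1 x = some w) : load μ2 w = q' w :=
  h2.load_eq_of_prefOut (hμ1.mem_accW hw) (hx.prefOut hw)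

theorem sdiff_subset_betterOff_of_better (h1 : I.Stable μ1) (h2 : (I.withCap q' hq').Stable μ2)
    {x : U} {w : W} (hx : I.Better x μ1 μ2) (hw : μ1 x = some w) :
    assignedFinset μ2 w \ assignedFinset μ1 w ⊆ I.betterOff μ1 μ2 := by
  intro y hy
  simp only [Finset.mem_sdiff, mem_assignedFinset] at hy
  exact mem_betterOff.2 <| h1.better_of_blocking h2.1.1 hy.1 hy.2
    (Or.inr ⟨x, hw, h2.rkW_lt_of_prefOut (h1.1.1.mem_accW hw) (hx.prefOut hw) hy.1⟩)

theorem sdiff_subset_betterOff_of_load_lt (h1 : I.Stable μ1)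
    (h2 : (I.withCap q' hq').Stable μ2) {w : W} (hw : load μ1 w < I.q w) :
    assignedFinset μ2 w \ assignedFinset μ1 w ⊆ I.betterOff μ1 μ2 := by
  intro y hy
  simp only [Finset.mem_sdiff, mem_assignedFinset] at hy
  exact mem_betterOff.2 <| h1.better_of_blocking h2.1.1 hy.1 hy.2 (Or.inl hw)

theorem card_betterOff_inter_assignedFinset_le (h1 : I.Stable μ1)
    (h2 : (I.withCap q' hq').Stable μ2) {w : W} (hq : I.q w ≤ q' w) :
    (I.betterOff μ1 μ2 ∩ assignedFinset μ1 w).card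
      ≤ (I.betterOff μ1 μ2 ∩ assignedFinset μ2 w).card := by
  obtain hempty | ⟨x, hx⟩ := (I.betterOff μ1 μ2 ∩ assignedFinset μ1 w).eq_empty_or_nonempty
  · simp [hempty]
  simp only [Finset.mem_inter, mem_betterOff, mem_assignedFinset] at hx
  have key := Finset.card_inter_add_card_le_of_sdiff_subset
    (disjoint_betterOff_inter_assignedFinset w) (sdiff_subset_betterOff_of_better h1 h2 hx.1 hx.2)
  rw [card_assignedFinset, card_assignedFinset, load_eq_of_better h1.1.1 h2 hx.1 hx.2] at key
  have := h1.1.2 w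
  omega

theorem card_betterOff_inter_assignedFinset_lt (h1 : I.Stable μ1)
    (h2 : (I.withCap q' hq').Stable μ2) {w : W} (hq : I.q w ≤ q' w) (hw : load μ1 w < I.q w)
    {u : U} (hu2 : u ∈ assignedTo μ2 w) (hu1 : u ∉ assignedTo μ1 w) :
    (I.betterOff μ1 μ2 ∩ assignedFinset μ1 w).card
      < (I.betterOff μ1 μ2 ∩ assignedFinset μ2 w).card := by
  have hsub := sdiff_subset_betterOff_of_load_lt h1 h2 hw
  obtain hempty | ⟨x, hx⟩ := (I.betterOff μ1 μ2 ∩ assignedFinset μ1 w).eq_empty_or_nonempty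
  · have hu : u ∈ assignedFinset μ2 w \ assignedFinset μ1 w := by
      simpa [assignedTo] using ⟨hu2, hu1⟩
    rw [hempty, Finset.card_empty, Finset.card_pos]
    exact ⟨u, Finset.mem_inter.2 ⟨hsub hu, (Finset.mem_sdiff.1 hu).1⟩⟩
  simp only [Finset.mem_inter, mem_betterOff, mem_assignedFinset] at hx
  have key := Finset.card_inter_add_card_le_of_sdiff_subset
    (disjoint_betterOff_inter_assignedFinset w) hsub
  rw [card_assignedFinset, card_assignedFinset, load_eq_of_better h1.1.1 h2 hx.1 hx.2] at key
  omega

theorem assignedTo_subset_of_load_lt (h1 : I.Stable μ1) (h2 : (I.withCap q' hq').Stable μ2)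
    (hq : ∀ w, I.q w ≤ q' w) {w : W} (hw : load μ1 w < I.q w) :
    assignedTo μ2 w ⊆ assignedTo μ1 w := by
  intro u hu2
  by_contra hu1
  have hlt := Finset.sum_lt_sum
    (fun w' _ => card_betterOff_inter_assignedFinset_le h1 h2 (hq w'))
    ⟨w, Finset.mem_univ _, card_betterOff_inter_assignedFinset_lt h1 h2 (hq w) hw hu2 hu1⟩
  rw [sum_card_betterOff_inter_assignedFinset] at hlt
  exact (sum_card_betterOff_inter_assignedFinset_le I μ1 μ2).not_gt hlt

end CapacityIncrease

theorem eq_withCap_of_eq {I1 I2 : MM U W} (haccS : I1.accS = I2.accS)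
    (haccW : I1.accW = I2.accW) (hrkS : I1.rkS = I2.rkS) (hrkW : I1.rkW = I2.rkW) :
    I2 = I1.withCap I2.q I2.q_pos := by
  cases I1
  cases I2
  subst haccS haccW hrkS hrkW
  rfl

end MM

/-- Lemma 2.4 (ii): if a school is under-filled in the
student-optimal stable matching of the smaller-capacity instance, then after a
capacity increase it only keeps (a subset of) its previously assigned students. -/
theorem statement_1 {U W : Type*} [Fintype U] [Fintype W] [DecidableEq U] [DecidableEq W]
    (I1 I2 : MM U W)
    (haccS : I1.accS = I2.accS) (haccW : I1.accW = I2.accW)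
    (hrkS : I1.rkS = I2.rkS) (hrkW : I1.rkW = I2.rkW)
    (hq : ∀ w, I1.q w ≤ I2.q w)
    (μ1 μ2 : U → Option W)
    (h1 : I1.StudentOptimal μ1) (h2 : I2.StudentOptimal μ2) :
    ∀ w, MM.load μ1 w < I1.q w → MM.assignedTo μ2 w ⊆ MM.assignedTo μ1 w := by
  rw [MM.eq_withCap_of_eq haccS haccW hrkS hrkW] at h2
  exact fun w hw => MM.assignedTo_subset_of_load_lt h1.1 h2.1 hq hw
end

section
/- For any MM instance, there exists an assignment vector v ∈ V minimizing n_je over V such that under μ̂+v no student of U_un justifiedly envies another student of U_un. -/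
private lemma exists_nat_min {α : Type*} (s : Set α) (hs : s.Nonempty) (f : α → ℕ) :
    ∃ a ∈ s, ∀ b ∈ s, f a ≤ f b := by
  classical
  have h : ∃ n : ℕ, ∃ a ∈ s, f a = n := ⟨f hs.choose, hs.choose, hs.choose_spec, rfl⟩
  obtain ⟨a, ha, hfa⟩ := Nat.find_spec h
  refine ⟨a, ha, fun b hb => ?_⟩
  rw [hfa]
  exact Nat.find_le ⟨b, hb, rfl⟩

/-- there is a minimizer `v` of `n_je` such that under
`μ̂ + v` no initially unmatched student justifiedly envies another initially
unmatched student. -/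
theorem statement_4 {U W : Type*} [Fintype U] [Fintype W] [DecidableEq U] [DecidableEq W]
    (I : MM U W) (μhat : U → Option W) (hopt : I.StudentOptimal μhat) :
    ∃ v : U → W, I.IsAsgVec μhat v ∧
      (∀ v' : U → W, I.IsAsgVec μhat v' → I.nje μhat v ≤ I.nje μhat v') ∧
      (∀ x y : U, μhat x = none → μhat y = none →
        ¬ I.JEnvy (MM.extend μhat v) x y) := by
  classical
  -- the set of assignment vectors is nonempty
  have hS : (Set.Nonempty {v : U → W | I.IsAsgVec μhat v}) :=
    ⟨fun u => (I.acc_ne u).choose, fun u _ => (I.acc_ne u).choose_spec⟩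
  -- minimize nje
  obtain ⟨v1, hv1, hv1min⟩ := exists_nat_min _ hS (I.nje μhat)
  -- among minimizers, minimize the total rank sum
  set S' : Set (U → W) :=
    {v | I.IsAsgVec μhat v ∧ ∀ v', I.IsAsgVec μhat v' → I.nje μhat v ≤ I.nje μhat v'} with hS'def
  have hS'ne : S'.Nonempty := ⟨v1, hv1, hv1min⟩
  obtain ⟨v, ⟨hvA, hvmin⟩, hvrk⟩ := exists_nat_min S' hS'ne
    (fun v => ∑ u, if μhat u = none then I.rkS u (v u) else 0)
  refine ⟨v, hvA, hvmin, ?_⟩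
  rintro x y hx hy ⟨w, hwy, hacc, hrkW, hpref⟩
  -- unfold extend at unmatched students
  have hey : MM.extend μhat v y = some (v y) := by simp [MM.extend, hy]
  have hex : MM.extend μhat v x = some (v x) := by simp [MM.extend, hx]
  rw [hey] at hwy
  have hw : w = v y := by exact (Option.some_injective _ hwy.symm)
  rw [hex] at hpref
  have hprefx : I.rkS x w < I.rkS x (v x) := by
    rcases hpref with h | ⟨w', hw', hlt⟩
    · exact absurd h (by simp)
    · rwa [← Option.some_injective _ hw'] at hlt
  -- the improved vector
  set v' : U → W := Function.update v x w with hv'def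
  have hv'A : I.IsAsgVec μhat v' := by
    intro u hu
    by_cases h : u = x
    · subst h
      simpa [hv'def, Function.update_self] using (I.acc_iff u w).mp hacc
    · simpa [hv'def, Function.update_of_ne h] using hvA u hu
  -- JEset v' ⊆ JEset v
  have hsub : I.JEset μhat v' ⊆ I.JEset μhat v := by
    rintro z ⟨hz, y', hy', w', hwy', hacc', hrkW', hpref'⟩
    obtain ⟨a, ha⟩ := Option.ne_none_iff_exists'.mp hz
    have hez : MM.extend μhat v' z = MM.extend μhat v z := by
      simp [MM.extend, ha]
    rw [hez] at hpref'
    have hey' : MM.extend μhat v' y' = some (v' y') := by simp [MM.extend, hy']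
    rw [hey'] at hwy'
    have hw' : w' = v' y' := Option.some_injective _ hwy'.symm
    by_cases h : y' = x
    · have hww : w' = w := by rw [hw', h, hv'def, Function.update_self]
      refine ⟨hz, y, hy, w', ?_, hacc', ?_, hpref'⟩
      · rw [hey, hww, hw]
      · rw [hww] at hrkW' ⊢
        rw [h] at hrkW'
        exact lt_trans hrkW' hrkW
    · have : w' = v y' := by rw [hw', hv'def, Function.update_of_ne h]
      refine ⟨hz, y', hy', w', ?_, hacc', hrkW', hpref'⟩
      simp [MM.extend, hy', this]
  have hnje' : I.nje μhat v' ≤ I.nje μhat v :=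
    Set.ncard_le_ncard hsub (Set.toFinite _)
  have hv'min : ∀ v'', I.IsAsgVec μhat v'' → I.nje μhat v' ≤ I.nje μhat v'' :=
    fun v'' h => le_trans hnje' (hvmin v'' h)
  have hv'S' : v' ∈ S' := ⟨hv'A, hv'min⟩
  have hle := hvrk v' hv'S'
  -- but v' has strictly smaller rank sum
  have hlt : (∑ u, if μhat u = none then I.rkS u (v' u) else 0) <
      (∑ u, if μhat u = none then I.rkS u (v u) else 0) := by
    apply Finset.sum_lt_sum
    · intro i _
      by_cases h : i = x
      · subst h
        simp only [hx, if_true, hv'def, Function.update_self]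
        exact le_of_lt hprefx
      · simp [hv'def, Function.update_of_ne h]
    · refine ⟨x, Finset.mem_univ x, ?_⟩
      simp only [hx, if_true, hv'def, Function.update_self]
      exact hprefx
  omega
end

section
/- If in an MM instance every school's priority order contains at most two students (Δ_sc ≤ 2), then n_je(v) = 0 for every assignment vector v ∈ V; consequently, the minimum of Σ_{w∈W} r(w) over capacity increase vectors r : W → ℕ such that the instance with capacities q + r admits a stable and perfect matching equals |U_un|. -/
namespace MMAux

open MM

set_option linter.unusedSectionVars false
variable {U W : Type*} [Fintype U] [Fintype W] [DecidableEq U] [DecidableEq W]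

lemma three_mem (I : MM U W) (hsc : ∀ w, (I.accW w).card ≤ 2) {w : W} {a b c : U}
    (ha : a ∈ I.accW w) (hb : b ∈ I.accW w) (hc : c ∈ I.accW w)
    (hab : a ≠ b) (hac : a ≠ c) (hbc : b ≠ c) : False := by
  have hsub : ({a, b, c} : Finset U) ⊆ I.accW w := by
    intro x hx
    simp only [Finset.mem_insert, Finset.mem_singleton] at hx
    rcases hx with rfl | rfl | rfl <;> assumption
  have hcard := Finset.card_le_card hsub
  rw [Finset.card_insert_of_notMem (by simp [hab, hac]),
      Finset.card_insert_of_notMem (by simp [hbc]), Finset.card_singleton] at hcard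
  have := hsc w
  omega

lemma load_eq_card (ν : U → Option W) (w : W) :
    MM.load ν w = (Finset.univ.filter (fun u => ν u = some w)).card := by
  classical
  rw [MM.load, MM.assignedTo, Set.ncard_eq_toFinset_card']
  congr 1
  ext u
  simp

lemma load_sum (ν : U → Option W) (g : U → W) (hg : ∀ u w, ν u = some w → g u = w) :
    ∑ w, MM.load ν w = Set.ncard {u | ν u ≠ none} := by
  classical
  rw [Set.ncard_eq_toFinset_card']
  have hto : {u | ν u ≠ none}.toFinset = Finset.univ.filter (fun u => ν u ≠ none) := by
    ext u; simp
  rw [hto, Finset.card_eq_sum_card_fiberwise (f := g) (t := Finset.univ)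
    (fun u _ => Finset.mem_univ _)]
  apply Finset.sum_congr rfl
  intro w _
  rw [load_eq_card]
  congr 1
  ext u
  simp only [Finset.mem_filter, Finset.mem_univ, true_and, Finset.filter_filter]
  cases hn : ν u with
  | none => simp [hn]
  | some w' => simp [hn, hg u w' hn]


/-- a student matched in both `μhat` and `μ`, strictly preferring his
`μhat`-school to his `μ`-school -/
def Chn (I : MM U W) (μhat μ : U → Option W) (x : U) : Prop :=
  ∃ wx w', μ x = some wx ∧ μhat x = some w' ∧ I.rkS x w' < I.rkS x wx

lemma chain_step (I : MM U W) (hsc : ∀ w, (I.accW w).card ≤ 2)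
    {μhat μ : U → Option W} {r : W → ℕ}
    (hst : I.Stable μhat) (hst' : (I.incCap r).Stable μ)
    {x : U} (hx : Chn I μhat μ x) :
    ∃ x', Chn I μhat μ x' ∧ μ x' = μhat x ∧
      (∀ z, μ z = μhat x → z = x') ∧ (∀ z, μhat z = μhat x → z = x) := by
  obtain ⟨wx, w', hμx, hμhx, hlt⟩ := hx
  have hw'x : w' ∈ I.accS x := hst.1.1 x w' hμhx
  have hwxx : wx ∈ I.accS x := hst'.1.1 x wx hμx
  have hxw' : x ∈ I.accW w' := (I.acc_iff x w').2 hw'x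
  have hwne : wx ≠ w' := by rintro rfl; exact absurd hlt (lt_irrefl _)
  -- (x, w') does not block μ in incCap r
  have hnb := hst'.2 x w'
  have hnc : ¬(MM.load μ w' < I.q w' + r w' ∨
      ∃ u' ∈ MM.assignedTo μ w', I.rkW w' x < I.rkW w' u') := by
    intro hc
    exact hnb ⟨hxw', Or.inr ⟨wx, hμx, hlt⟩, hc⟩
  push_neg at hnc
  obtain ⟨hfull, hall⟩ := hnc
  have hq1 : 1 ≤ I.q w' := I.q_pos w'
  -- there is some x' matched to w' by μ
  have hne : (MM.assignedTo μ w').Nonempty :=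
    Set.nonempty_of_ncard_ne_zero (by rw [MM.load] at hfull; omega)
  obtain ⟨x', hx'⟩ := hne
  have hμx' : μ x' = some w' := hx'
  have hx'x : x' ≠ x := by
    rintro rfl; rw [hμx] at hμx'
    exact hwne (Option.some_injective _ hμx')
  have hx'acc : x' ∈ I.accW w' := (I.acc_iff x' w').2 (hst'.1.1 x' w' hμx')
  have hrkx' : I.rkW w' x' < I.rkW w' x := by
    have h1 := hall x' hx'
    have h2 : I.rkW w' x' ≠ I.rkW w' x := fun h => hx'x (I.rkW_inj w' x' hx'acc x hxw' h)
    omega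
  -- μ assigns only x' to w'
  have huniqμ : ∀ z, μ z = some w' → z = x' := by
    intro z hz
    by_contra hzx'
    have hzx : z ≠ x := by
      rintro rfl; rw [hμx] at hz; exact hwne (Option.some_injective _ hz)
    have hzacc : z ∈ I.accW w' := (I.acc_iff z w').2 (hst'.1.1 z w' hz)
    exact three_mem I hsc hxw' hx'acc hzacc (Ne.symm hx'x) (Ne.symm hzx) (Ne.symm hzx')
  have hloadμ : MM.load μ w' = 1 := by
    have : MM.assignedTo μ w' = {x'} := by
      apply Set.eq_singleton_iff_unique_mem.2
      exact ⟨hx', fun z hz => huniqμ z hz⟩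
    rw [MM.load, this, Set.ncard_singleton]
  have hqr : I.q w' = 1 ∧ r w' = 0 := by rw [hloadμ] at hfull; omega
  -- μhat assigns only x to w'
  have huniqμh : ∀ z, μhat z = some w' → z = x := by
    intro z hz
    by_contra hzx
    have h2 : 1 < MM.load μhat w' := by
      rw [MM.load]
      exact Set.one_lt_ncard_iff (Set.toFinite _) |>.2 ⟨z, x, hz, hμhx, hzx⟩
    have h3 := hst.1.2 w'
    omega
  -- x' is not matched to w' by μhat
  have hμhx' : μhat x' ≠ some w' := fun h => hx'x (huniqμh x' h)
  -- (x', w') does not block μhat, but priority condition holds, so x' prefers μhat x'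
  have hnb2 := hst.2 x' w'
  have hnp : ¬ I.PrefOut x' w' (μhat x') := by
    intro hp
    exact hnb2 ⟨hx'acc, hp, Or.inr ⟨x, hμhx, hrkx'⟩⟩
  rw [MM.PrefOut] at hnp
  push_neg at hnp
  obtain ⟨hnn, hno⟩ := hnp
  cases hmx' : μhat x' with
  | none => exact absurd hmx' hnn
  | some w'' =>
    have hw''ne : w'' ≠ w' := by rintro rfl; exact hμhx' hmx'
    have hw''acc : w'' ∈ I.accS x' := hst.1.1 x' w'' hmx'
    have hw'x' : w' ∈ I.accS x' := hst'.1.1 x' w' hμx'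
    have hnlt : I.rkS x' w'' ≤ I.rkS x' w' := hno w'' hmx'
    have hlt2 : I.rkS x' w'' < I.rkS x' w' := by
      have : I.rkS x' w'' ≠ I.rkS x' w' :=
        fun h => hw''ne (I.rkS_inj x' w'' hw''acc w' hw'x' h)
      omega
    refine ⟨x', ⟨w', w'', hμx', hmx', hlt2⟩, ?_, ?_, ?_⟩
    · rw [hμhx]; exact hμx'
    · rw [hμhx]; exact huniqμ
    · rw [hμhx]; exact huniqμh

lemma no_chain (I : MM U W) (hsc : ∀ w, (I.accW w).card ≤ 2)
    {μhat μ : U → Option W} {r : W → ℕ}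
    (hst : I.Stable μhat) (hst' : (I.incCap r).Stable μ)
    {x0 : U} (h0 : Chn I μhat μ x0)
    (hex : ∀ y, Chn I μhat μ y → μhat y = μ x0 →
      (∀ z, μ z = μ x0 → z = x0) → False) : False := by
  classical
  have step : ∀ x : {x : U // Chn I μhat μ x}, ∃ x' : {x : U // Chn I μhat μ x},
      μ x'.1 = μhat x.1 ∧ (∀ z, μ z = μhat x.1 → z = x'.1) ∧
      (∀ z, μhat z = μhat x.1 → z = x.1) := by
    rintro ⟨x, hx⟩
    obtain ⟨x', hc', h1, h2, h3⟩ := chain_step I hsc hst hst' hx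
    exact ⟨⟨x', hc'⟩, h1, h2, h3⟩
  choose s hs1 hs2 hs3 using step
  have hinj : Function.Injective s := by
    intro a b hab
    have heq : μhat a.1 = μhat b.1 := by rw [← hs1 a, hab, hs1 b]
    exact Subtype.ext (hs3 b a.1 heq)
  obtain ⟨y, hy⟩ := (Finite.injective_iff_surjective.1 hinj) ⟨x0, h0⟩
  have hy1 : μ x0 = μhat y.1 := by rw [← hs1 y, hy]
  refine hex y.1 y.2 hy1.symm ?_
  intro z hz
  have := hs2 y z (by rw [← hy1]; exact hz)
  rw [this, hy]

lemma chn_of_slack (I : MM U W) {μhat μ : U → Option W} {r : W → ℕ}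
    (hst : I.Stable μhat) (hst' : (I.incCap r).Stable μ)
    {x0 : U} {w : W} (hx0 : μ x0 = some w) (hslack : MM.load μhat w < I.q w)
    (hnw : μhat x0 ≠ some w) : Chn I μhat μ x0 := by
  have hwacc : w ∈ I.accS x0 := hst'.1.1 x0 w hx0
  have hxacc : x0 ∈ I.accW w := (I.acc_iff x0 w).2 hwacc
  have hnp : ¬ I.PrefOut x0 w (μhat x0) := by
    intro hp
    exact hst.2 x0 w ⟨hxacc, hp, Or.inl hslack⟩
  rw [MM.PrefOut] at hnp
  push_neg at hnp
  obtain ⟨hnn, hno⟩ := hnp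
  cases hmx : μhat x0 with
  | none => exact absurd hmx hnn
  | some w0 =>
    have hw0ne : w0 ≠ w := by rintro rfl; exact hnw hmx
    have hw0acc : w0 ∈ I.accS x0 := hst.1.1 x0 w0 hmx
    have hle := hno w0 hmx
    have hlt : I.rkS x0 w0 < I.rkS x0 w := by
      have : I.rkS x0 w0 ≠ I.rkS x0 w :=
        fun h => hw0ne (I.rkS_inj x0 w0 hw0acc w hwacc h)
      omega
    exact ⟨w, w0, hx0, hmx, hlt⟩

lemma load_le (I : MM U W) (hsc : ∀ w, (I.accW w).card ≤ 2)
    {μhat μ : U → Option W} {r : W → ℕ}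
    (hst : I.Stable μhat) (hst' : (I.incCap r).Stable μ) (w : W) :
    MM.load μ w ≤ MM.load μhat w + r w := by
  by_contra hcon
  push_neg at hcon
  have hle2 : MM.load μ w ≤ 2 := by
    have hsub : MM.assignedTo μ w ⊆ ↑(I.accW w) := by
      intro u hu
      have : μ u = some w := hu
      exact (I.acc_iff u w).2 (hst'.1.1 u w this)
    calc MM.load μ w ≤ (↑(I.accW w) : Set U).ncard :=
          Set.ncard_le_ncard hsub (Set.toFinite _)
      _ = (I.accW w).card := Set.ncard_coe_finset _
      _ ≤ 2 := hsc w
  have hq1 : 1 ≤ I.q w := I.q_pos w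
  have hfeas : MM.load μ w ≤ I.q w + r w := hst'.1.2 w
  interval_cases hl : MM.load μ w
  · omega
  · -- load μ w = 1 : load μhat w = 0 and r w = 0
    have hm0 : MM.load μhat w = 0 := by omega
    have hempty : MM.assignedTo μhat w = ∅ := by
      rw [MM.load] at hm0
      exact (Set.ncard_eq_zero (Set.toFinite _)).1 hm0
    obtain ⟨x0, hx0⟩ := Set.nonempty_of_ncard_ne_zero (s := MM.assignedTo μ w)
      (by rw [MM.load] at hl; omega)
    have hx0' : μ x0 = some w := hx0
    have hnw : μhat x0 ≠ some w := by
      intro h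
      have : x0 ∈ MM.assignedTo μhat w := h
      rw [hempty] at this; exact this
    have hchn : Chn I μhat μ x0 := chn_of_slack I hst hst' hx0' (by omega) hnw
    refine no_chain I hsc hst hst' hchn ?_
    intro y _ hy _
    rw [hx0'] at hy
    have : y ∈ MM.assignedTo μhat w := hy
    rw [hempty] at this; exact this
  · -- load μ w = 2
    have hm1 : MM.load μhat w + r w ≤ 1 := by omega
    have hslack : MM.load μhat w < I.q w := by omega
    obtain ⟨a, b, hab, hset⟩ := Set.ncard_eq_two.1 (by rw [MM.load] at hl; exact hl)
    have ha : μ a = some w := by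
      have : a ∈ MM.assignedTo μ w := by rw [hset]; simp
      exact this
    have hb : μ b = some w := by
      have : b ∈ MM.assignedTo μ w := by rw [hset]; simp
      exact this
    have hnot : ¬ (μhat a = some w ∧ μhat b = some w) := by
      rintro ⟨h1, h2⟩
      have : 1 < MM.load μhat w := by
        rw [MM.load]
        exact Set.one_lt_ncard_iff (Set.toFinite _) |>.2 ⟨a, b, h1, h2, hab⟩
      omega
    -- pick x0 among a, b with μhat x0 ≠ some w, and x1 the other one
    obtain ⟨x0, x1, hx01, hμ0, hμ1, hnw⟩ :
        ∃ x0 x1, x0 ≠ x1 ∧ μ x0 = some w ∧ μ x1 = some w ∧ μhat x0 ≠ some w := by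
      by_cases hA : μhat a = some w
      · exact ⟨b, a, hab.symm, hb, ha, fun h => hnot ⟨hA, h⟩⟩
      · exact ⟨a, b, hab, ha, hb, hA⟩
    have hchn : Chn I μhat μ x0 := chn_of_slack I hst hst' hμ0 hslack hnw
    refine no_chain I hsc hst hst' hchn ?_
    intro y _ _ huniq
    have h1 := huniq x1 (by rw [hμ0]; exact hμ1)
    exact hx01 h1.symm

lemma jeset_empty (I : MM U W) (hsc : ∀ w, (I.accW w).card ≤ 2)
    {μhat : U → Option W} (hst : I.Stable μhat) {v : U → W}
    (hv : I.IsAsgVec μhat v) : I.JEset μhat v = ∅ := by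
  rw [Set.eq_empty_iff_forall_notMem]
  rintro x ⟨hxm, y, hy, w, hσy, hxacc, _, hpref⟩
  -- σ y = some (v y)
  have hwvy : w = v y := by
    simp only [MM.extend, hy, Option.getD_none, Option.some.injEq] at hσy
    exact hσy.symm
  obtain ⟨wx, hμx⟩ : ∃ wx, μhat x = some wx := Option.ne_none_iff_exists'.1 hxm
  have hσx : MM.extend μhat v x = some wx := by simp [MM.extend, hμx]
  have hlt : I.rkS x w < I.rkS x wx := by
    rcases hpref with h | ⟨w2, heq, hlt⟩
    · rw [hσx] at h; exact absurd h (by simp)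
    · rw [hσx] at heq
      obtain rfl : wx = w2 := Option.some_injective _ heq
      exact hlt
  have hwne : w ≠ wx := by rintro rfl; exact absurd hlt (lt_irrefl _)
  have hnc : ¬(MM.load μhat w < I.q w ∨
      ∃ u' ∈ MM.assignedTo μhat w, I.rkW w x < I.rkW w u') := by
    intro hc
    exact hst.2 x w ⟨hxacc, Or.inr ⟨wx, hμx, hlt⟩, hc⟩
  push_neg at hnc
  obtain ⟨hfull, _⟩ := hnc
  obtain ⟨z, hz⟩ := Set.nonempty_of_ncard_ne_zero (s := MM.assignedTo μhat w)
    (by rw [MM.load] at hfull; have := I.q_pos w; omega)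
  have hμz : μhat z = some w := hz
  have hyacc : y ∈ I.accW w := (I.acc_iff y w).2 (hwvy ▸ hv y hy)
  have hzacc : z ∈ I.accW w := (I.acc_iff z w).2 (hst.1.1 z w hμz)
  have hxy : x ≠ y := by rintro rfl; rw [hμx] at hy; exact absurd hy (by simp)
  have hzy : z ≠ y := by rintro rfl; rw [hμz] at hy; exact absurd hy (by simp)
  have hxz : x ≠ z := by
    rintro rfl; rw [hμx] at hμz
    exact hwne (Option.some_injective _ hμz).symm
  exact three_mem I hsc hxacc hyacc hzacc hxy hxz (Ne.symm hzy)

lemma extend_assigned (μhat : U → Option W) (v : U → W) (w : W) :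
    MM.assignedTo (MM.extend μhat v) w =
      MM.assignedTo μhat w ∪ {u | μhat u = none ∧ v u = w} := by
  ext u
  simp only [MM.assignedTo, MM.extend, Set.mem_setOf_eq, Set.mem_union,
    Option.some.injEq]
  cases h : μhat u <;> simp [h]

lemma extend_load (μhat : U → Option W) (v : U → W) (w : W) [DecidablePred (fun u => μhat u = none ∧ v u = w)] :
    MM.load (MM.extend μhat v) w =
      MM.load μhat w + (Finset.univ.filter (fun u => μhat u = none ∧ v u = w)).card := by
  rw [MM.load, extend_assigned, Set.ncard_union_eq ?disj (Set.toFinite _) (Set.toFinite _)]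
  · congr 1
    rw [Set.ncard_eq_toFinset_card']
    congr 1
    ext u
    simp
  case disj =>
    rw [Set.disjoint_left]
    rintro u hu ⟨h1, _⟩
    have : μhat u = some w := hu
    rw [this] at h1
    exact absurd h1 (by simp)

lemma extend_stable (I : MM U W) (hsc : ∀ w, (I.accW w).card ≤ 2)
    {μhat : U → Option W} (hst : I.Stable μhat) {v : U → W}
    (hv : I.IsAsgVec μhat v) :
    (I.incCap (fun w =>
      (Finset.univ.filter (fun u => μhat u = none ∧ v u = w)).card)).Stable
      (MM.extend μhat v) := by
  classical
  set r : W → ℕ :=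
    fun w => (Finset.univ.filter (fun u => μhat u = none ∧ v u = w)).card with hr
  constructor
  · constructor
    · intro u w h
      simp only [MM.extend, Option.some.injEq] at h
      cases hm : μhat u with
      | none =>
        rw [hm, Option.getD_none] at h
        exact h ▸ hv u hm
      | some a =>
        rw [hm, Option.getD_some] at h
        exact h ▸ hst.1.1 u a hm
    · intro w
      rw [extend_load]
      exact Nat.add_le_add_right (hst.1.2 w) _
  · rintro x w ⟨hacc, hpref, hcond⟩
    have hσx : MM.extend μhat v x = some ((μhat x).getD (v x)) := rfl
    have hlt : I.rkS x w < I.rkS x ((μhat x).getD (v x)) := by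
      rcases hpref with h | ⟨w2, heq, hlt2⟩
      · rw [hσx] at h; exact absurd h (by simp)
      · rw [hσx] at heq
        rw [Option.some_injective _ heq]
        exact hlt2
    have hPO : I.PrefOut x w (μhat x) := by
      cases hm : μhat x with
      | none => exact Or.inl rfl
      | some wx =>
        refine Or.inr ⟨wx, rfl, ?_⟩
        rw [hm, Option.getD_some] at hlt
        exact hlt
    have hnc : ¬(MM.load μhat w < I.q w ∨
        ∃ u' ∈ MM.assignedTo μhat w, I.rkW w x < I.rkW w u') := by
      intro hc
      exact hst.2 x w ⟨hacc, hPO, hc⟩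
    push_neg at hnc
    obtain ⟨hfull, hall⟩ := hnc
    rcases hcond with hsl | ⟨u', hu', hrk⟩
    · rw [extend_load] at hsl
      have : MM.load μhat w + r w < I.q w + r w := hsl
      omega
    · have hu'some : (μhat u').getD (v u') = w := Option.some_injective _ hu'
      cases hm' : μhat u' with
      | some a =>
        rw [hm', Option.getD_some] at hu'some
        have h2 := hall u' (show μhat u' = some w by rw [hm', hu'some])
        have h3 : I.rkW w x < I.rkW w u' := hrk
        omega
      | none =>
        rw [hm', Option.getD_none] at hu'some
        obtain ⟨z, hz⟩ := Set.nonempty_of_ncard_ne_zero (s := MM.assignedTo μhat w)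
          (by rw [MM.load] at hfull; have := I.q_pos w; omega)
        have hμz : μhat z = some w := hz
        have hu'acc : u' ∈ I.accW w := (I.acc_iff u' w).2 (hu'some ▸ hv u' hm')
        have hzacc : z ∈ I.accW w := (I.acc_iff z w).2 (hst.1.1 z w hμz)
        have hwne : w ≠ (μhat x).getD (v x) := by
          rintro h; rw [← h] at hlt; exact absurd hlt (lt_irrefl _)
        have hxu' : x ≠ u' := by
          rintro rfl
          rw [hm', Option.getD_none] at hwne
          exact hwne hu'some.symm
        have hxz : x ≠ z := by
          rintro rfl
          rw [hμz, Option.getD_some] at hwne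
          exact hwne rfl
        have hzu' : z ≠ u' := by
          rintro rfl; rw [hμz] at hm'; exact absurd hm' (by simp)
        exact three_mem I hsc hacc hu'acc hzacc hxu' hxz (Ne.symm hzu')

lemma rsum (μhat : U → Option W) (v : U → W) :
    ∑ w, (Finset.univ.filter (fun u => μhat u = none ∧ v u = w)).card
      = (MM.unmatchedSet μhat).ncard := by
  rw [MM.unmatchedSet, Set.ncard_eq_toFinset_card']
  have hto : {u | μhat u = none}.toFinset = Finset.univ.filter (fun u => μhat u = none) := by
    ext u; simp
  rw [hto, Finset.card_eq_sum_card_fiberwise (f := v) (t := Finset.univ)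
    (fun u _ => Finset.mem_univ _)]
  apply Finset.sum_congr rfl
  intro w _
  rw [Finset.filter_filter]

end MMAux

/-- if every priority list has length at most two, then
`n_je(v) = 0` for every assignment vector, and the minimum total capacity
increase yielding a stable and perfect matching is exactly `|U_un|`. -/
theorem statement_5 {U W : Type*} [Fintype U] [Fintype W] [DecidableEq U] [DecidableEq W]
    (I : MM U W) (hsc : ∀ w, (I.accW w).card ≤ 2)
    (μhat : U → Option W) (hopt : I.StudentOptimal μhat) :
    (∀ v : U → W, I.IsAsgVec μhat v → I.nje μhat v = 0) ∧
    sInf {s : ℕ | ∃ r : W → ℕ, (∑ w, r w) = s ∧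
        ∃ μ : U → Option W, (I.incCap r).Stable μ ∧ MM.Perfect μ}
      = (MM.unmatchedSet μhat).ncard := by
  classical
  have hst : I.Stable μhat := hopt.1
  constructor
  · intro v hv
    rw [MM.nje, MMAux.jeset_empty I hsc hst hv, Set.ncard_empty]
  · set S : Set ℕ := {s : ℕ | ∃ r : W → ℕ, (∑ w, r w) = s ∧
        ∃ μ : U → Option W, (I.incCap r).Stable μ ∧ MM.Perfect μ} with hS
    set v : U → W := fun u => (I.acc_ne u).choose with hvdef
    have hvAsg : I.IsAsgVec μhat v := fun u _ => (I.acc_ne u).choose_spec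
    have hmem : (MM.unmatchedSet μhat).ncard ∈ S := by
      refine ⟨fun w => (Finset.univ.filter (fun u => μhat u = none ∧ v u = w)).card,
        MMAux.rsum μhat v, MM.extend μhat v, MMAux.extend_stable I hsc hst hvAsg, ?_⟩
      intro u
      simp [MM.extend]
    have hlb : ∀ s ∈ S, (MM.unmatchedSet μhat).ncard ≤ s := by
      rintro s ⟨r, rfl, μ, hstab, hperf⟩
      have h1 : ∑ w, MM.load μ w = Fintype.card U := by
        rw [MMAux.load_sum μ (fun u => (μ u).getD (v u))
          (fun u w h => by show (μ u).getD (v u) = w; rw [h]; rfl)]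
        have : {u : U | μ u ≠ none} = Set.univ := by
          ext u; simpa using hperf u
        rw [this, Set.ncard_univ, Nat.card_eq_fintype_card]
      have h2 : ∑ w, MM.load μhat w = Set.ncard {u | μhat u ≠ none} :=
        MMAux.load_sum μhat (fun u => (μhat u).getD (v u))
          (fun u w h => by show (μhat u).getD (v u) = w; rw [h]; rfl)
      have h3 : Set.ncard {u | μhat u ≠ none} + (MM.unmatchedSet μhat).ncard
          = Fintype.card U := by
        have hc := Set.ncard_add_ncard_compl {u : U | μhat u = none}
          (Set.toFinite _) (Set.toFinite _)
        have : {u : U | μhat u = none}ᶜ = {u : U | μhat u ≠ none} := by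
          ext u; simp
        rw [this, Nat.card_eq_fintype_card] at hc
        rw [MM.unmatchedSet]
        omega
      have h4 : ∑ w, MM.load μ w ≤ ∑ w, (MM.load μhat w + r w) :=
        Finset.sum_le_sum (fun w _ => MMAux.load_le I hsc hst hstab w)
      rw [Finset.sum_add_distrib] at h4
      omega
    have hne : S.Nonempty := ⟨_, hmem⟩
    exact le_antisymm (Nat.sInf_le hmem) (hlb _ (Nat.sInf_mem hne))
end

section
/- For every graph G = (V,E) with V = {v_1,…,v_n̂} and E = {e_1,…,e_m̂} and every integer h ≥ 0: G has a vertex cover of size at most h (a set V' ⊆ V with |V'| ≤ h meeting every edge) if and only if there is a capacity increase vector r : W → ℕ with Σ_w r(w) ≤ m̂ + h such that the instance I(G) with capacities q + r admits a stable and perfect matching. -/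
section VertexCover

/-!
The reduction of Theorem 3.1: from a graph `G` (with `n` vertices, `m` edges,
edge `t` having endpoints `efst t < esnd t`) we build the MM instance `I(G)`.
-/

variable (n m : ℕ) (efst esnd : Fin m → Fin n)

/-- incidences of `G`: pairs `(v_i, e_t)` with `v_i ∈ e_t` -/
abbrev VCInc := {p : Fin n × Fin m // efst p.2 = p.1 ∨ esnd p.2 = p.1}

/-- schools: a school `v_i^t` for every incidence and a school `w_i`
for every vertex -/
abbrev VCSch := VCInc n m efst esnd ⊕ Fin n

/-- students: an edge-student `e_t` for every edge, a dummy student `d_i^t`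
for every incidence, and a student `u_i` for every vertex -/
abbrev VCStu := Fin m ⊕ (VCInc n m efst esnd ⊕ Fin n)

def vcAccS : VCStu n m efst esnd → Finset (VCSch n m efst esnd)
  | Sum.inl t => {Sum.inl ⟨(efst t, t), Or.inl rfl⟩, Sum.inl ⟨(esnd t, t), Or.inr rfl⟩}
  | Sum.inr (Sum.inl p) => {Sum.inl p}
  | Sum.inr (Sum.inr i) =>
      Finset.univ.filter
        (fun s => Sum.elim (fun p : VCInc n m efst esnd => p.1.1) id s = i)

def vcRkS : VCStu n m efst esnd → VCSch n m efst esnd → ℕ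
  | Sum.inl t, Sum.inl p => if p.1.1 = efst t then 0 else 1
  | Sum.inl _, Sum.inr _ => 0
  | Sum.inr (Sum.inl _), _ => 0
  | Sum.inr (Sum.inr _), Sum.inl p => p.1.2.val
  | Sum.inr (Sum.inr _), Sum.inr _ => m

def vcAccW : VCSch n m efst esnd → Finset (VCStu n m efst esnd)
  | Sum.inl p => {Sum.inr (Sum.inl p), Sum.inr (Sum.inr p.1.1), Sum.inl p.1.2}
  | Sum.inr i => {Sum.inr (Sum.inr i)}

def vcRkW : VCSch n m efst esnd → VCStu n m efst esnd → ℕ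
  | Sum.inl _, Sum.inr (Sum.inl _) => 0
  | Sum.inl _, Sum.inr (Sum.inr _) => 1
  | Sum.inl _, Sum.inl _ => 2
  | Sum.inr _, _ => 0

/-- the instance `I(G)` of Theorem 3.1; all capacities are one -/
def IG (hlt : ∀ t, efst t < esnd t) :
    MM (VCStu n m efst esnd) (VCSch n m efst esnd) where
  accS := vcAccS n m efst esnd
  accW := vcAccW n m efst esnd
  acc_ne := by
    rintro (t | p | i)
    · exact ⟨_, Finset.mem_insert_self _ _⟩
    · exact ⟨_, Finset.mem_singleton_self _⟩
    · exact ⟨Sum.inr i, by simp [vcAccS]⟩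
  acc_iff := by
    rintro (t | p' | i') (⟨⟨i0, t0⟩, hp⟩ | i) <;>
      simp [vcAccS, vcAccW, Subtype.ext_iff, Prod.ext_iff] <;> aesop
  rkS := vcRkS n m efst esnd
  rkW := vcRkW n m efst esnd
  rkS_inj := by
    rintro (t | p' | i') w1 h1 w2 h2 heq
    · simp only [vcAccS, Finset.mem_insert, Finset.mem_singleton] at h1 h2
      have hne : esnd t ≠ efst t := (hlt t).ne'
      rcases h1 with rfl | rfl <;> rcases h2 with rfl | rfl <;>
        simp_all [vcRkS]
    · simp only [vcAccS, Finset.mem_singleton] at h1 h2; rw [h1, h2]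
    · rcases w1 with p1 | j1 <;> rcases w2 with p2 | j2 <;>
        simp only [vcAccS, Finset.mem_filter, Sum.elim_inl, Sum.elim_inr,
          id_eq] at h1 h2 <;> simp only [vcRkS] at heq
      · have : p1.1.2 = p2.1.2 := Fin.val_injective heq
        congr 1
        exact Subtype.ext (Prod.ext (h1.2.trans h2.2.symm) this)
      · exact absurd heq (Nat.ne_of_lt p1.1.2.isLt)
      · exact absurd heq.symm (Nat.ne_of_lt p2.1.2.isLt)
      · rw [h1.2, h2.2]
  rkW_inj := by
    rintro (p | i) u1 h1 u2 h2 heq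
    · simp only [vcAccW, Finset.mem_insert, Finset.mem_singleton] at h1 h2
      rcases h1 with rfl | rfl | rfl <;> rcases h2 with rfl | rfl | rfl <;>
        simp_all [vcRkW]
    · simp only [vcAccW, Finset.mem_singleton] at h1 h2; rw [h1, h2]
  q := fun _ => 1
  q_pos := fun _ => le_rfl

/-!
Given a vertex cover `S`, send each edge-student `e_t` to the school of an endpoint of `e_t`
lying in `S`, each dummy to its own school, and each `u_i` with `i ∈ S` to its first choice
`v_i^t` (the other `u_i` to `w_i`). Raising every capacity to the load of its school costs one
seat per edge and at most one per vertex of `S`. Every incidence school is then full and holds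
its top-priority dummy, so the only possible blocking pair is `(u_i, v_i^t)` with `e_t` at
`v_i^t`; but then `i ∈ S` and `u_i` already has its first choice.

Conversely, in a stable perfect matching each `e_t` sits at some `v_i^t`, and then `u_i` must
sit at an incidence school, as otherwise `(u_i, v_i^t)` blocks. So the vertices whose student
sits at an incidence school form a cover; counting the students at incidence schools (all `m`
edge-students, all dummies and these vertex-students) against the capacities `1 + r` bounds
its size by `∑ r - m ≤ h`.
-/

open Finset

namespace MM

noncomputable def loadExcess {U W : Type*} (μ : U → Option W) (w : W) : ℕ := load μ w - 1

variable {U W : Type*} [Fintype U] [DecidableEq W]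

theorem load_eq_card_filter (μ : U → Option W) (w : W) :
    load μ w = #{u | μ u = some w} := by
  rw [load, ← Set.ncard_coe_finset]
  congr 1
  ext u
  simp [assignedTo]

theorem one_le_load {μ : U → Option W} {u : U} {w : W} (h : μ u = some w) :
    1 ≤ load μ w := by
  rw [load_eq_card_filter, Nat.one_le_iff_ne_zero, Ne, card_eq_zero,
    filter_eq_empty_iff, not_forall]
  exact ⟨u, by simp [h]⟩

theorem sum_load_comp_eq_card {ι : Type*} [Fintype ι] (μ : U → Option W) {f : ι → W}
    (hf : Function.Injective f) :
    ∑ i, load μ (f i) = #{u | ∃ i, μ u = some (f i)} := by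
  classical
  have hunion : ({u | ∃ i, μ u = some (f i)} : Finset U) =
      univ.biUnion fun i => {u | μ u = some (f i)} := by
    ext u
    simp
  rw [hunion, card_biUnion]
  · simp only [load_eq_card_filter]
  · intro i _ j _ hij
    refine disjoint_filter.2 fun u _ hi hj => hij (hf ?_)
    exact Option.some_injective _ (hi.symm.trans hj)

variable [Fintype W] [DecidableEq U]

theorem exists_mem_accS_of_perfect {I : MM U W} {μ : U → Option W} (hμ : I.IsMatching μ)
    (hperf : Perfect μ) (u : U) : ∃ w ∈ I.accS u, μ u = some w := by
  obtain ⟨w, hw⟩ := Option.ne_none_iff_exists'.1 (hperf u)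
  exact ⟨w, hμ u w hw, hw⟩

theorem not_prefOut_some_of_rkS_le (I : MM U W) {u : U} {w w' : W}
    (h : I.rkS u w' ≤ I.rkS u w) : ¬ I.PrefOut u w (some w') := by
  rintro (h' | ⟨w'', hw'', hlt⟩)
  · exact Option.some_ne_none _ h'
  · cases hw''
    omega

theorem not_blocks_of_le_load {I : MM U W} {μ : U → Option W} {u : U} {w : W}
    (hq : I.q w ≤ load μ w) (hrk : ∀ u' ∈ assignedTo μ w, I.rkW w u' ≤ I.rkW w u) :
    ¬ I.Blocks μ u w := by
  rintro ⟨-, -, hfree | ⟨u', hu', hlt⟩⟩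
  · omega
  · exact absurd (hrk u' hu') (not_le.2 hlt)

end MM

namespace IG

variable {n m : ℕ} {efst esnd : Fin m → Fin n} {hlt : ∀ t, efst t < esnd t}
  {r : VCSch n m efst esnd → ℕ}

@[simp] theorem incCap_accS : ((IG n m efst esnd hlt).incCap r).accS = vcAccS n m efst esnd :=
  rfl

@[simp] theorem incCap_accW : ((IG n m efst esnd hlt).incCap r).accW = vcAccW n m efst esnd :=
  rfl

@[simp] theorem incCap_rkS : ((IG n m efst esnd hlt).incCap r).rkS = vcRkS n m efst esnd :=
  rfl

@[simp] theorem incCap_rkW : ((IG n m efst esnd hlt).incCap r).rkW = vcRkW n m efst esnd :=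
  rfl

@[simp] theorem incCap_q (w : VCSch n m efst esnd) :
    ((IG n m efst esnd hlt).incCap r).q w = 1 + r w :=
  rfl

variable (efst esnd) in
def matchedVertices (μ : VCStu n m efst esnd → Option (VCSch n m efst esnd)) :
    Finset (Fin n) :=
  {i | ∃ p, μ (.inr (.inr i)) = some (.inl p)}

variable {μ : VCStu n m efst esnd → Option (VCSch n m efst esnd)}

theorem card_matched_incidence (hedge : ∀ t, ∃ p, μ (.inl t) = some (.inl p))
    (hdummy : ∀ p, μ (.inr (.inl p)) = some (.inl p)) :
    #{u | ∃ p, μ u = some (.inl p)} =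
      m + Fintype.card (VCInc n m efst esnd) + #(matchedVertices efst esnd μ) := by
  rw [card_filter, Fintype.sum_sum_type, Fintype.sum_sum_type, matchedVertices, card_filter]
  simp [hedge, hdummy, add_assoc]

theorem dummy_matched (hμ : ((IG n m efst esnd hlt).incCap r).IsMatching μ)
    (hperf : MM.Perfect μ) (p : VCInc n m efst esnd) : μ (.inr (.inl p)) = some (.inl p) := by
  obtain ⟨w, hw, hμw⟩ := MM.exists_mem_accS_of_perfect hμ hperf (.inr (.inl p))
  simp_all [vcAccS]

theorem edge_matched (hμ : ((IG n m efst esnd hlt).incCap r).IsMatching μ)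
    (hperf : MM.Perfect μ) (t : Fin m) :
    ∃ p : VCInc n m efst esnd, μ (.inl t) = some (.inl p) ∧ p.1.2 = t := by
  obtain ⟨w, hw, hμw⟩ := MM.exists_mem_accS_of_perfect hμ hperf (.inl t)
  simp only [incCap_accS, vcAccS, mem_insert, mem_singleton] at hw
  rcases hw with rfl | rfl <;> exact ⟨_, hμw, rfl⟩

theorem vertex_matched_of_not_mem (hμ : ((IG n m efst esnd hlt).incCap r).IsMatching μ)
    (hperf : MM.Perfect μ) {i : Fin n} (hi : i ∉ matchedVertices efst esnd μ) :
    μ (.inr (.inr i)) = some (.inr i) := by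
  obtain ⟨w | j, hw, hμw⟩ := MM.exists_mem_accS_of_perfect hμ hperf (.inr (.inr i))
  · simp only [matchedVertices, mem_filter, mem_univ, true_and] at hi
    exact absurd ⟨w, hμw⟩ hi
  · simp_all [vcAccS]

theorem mem_matchedVertices_of_edge (hst : ((IG n m efst esnd hlt).incCap r).Stable μ)
    (hperf : MM.Perfect μ) {t : Fin m} {p : VCInc n m efst esnd}
    (ht : μ (.inl t) = some (.inl p)) : p.1.1 ∈ matchedVertices efst esnd μ := by
  by_contra hi
  have hu := vertex_matched_of_not_mem hst.1.1 hperf hi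
  refine hst.2 (.inr (.inr p.1.1)) (.inl p) ⟨?_, ?_, ?_⟩
  · simp [vcAccW]
  · exact Or.inr ⟨_, hu, by simp [vcRkS]⟩
  · exact Or.inr ⟨.inl t, ht, by simp [vcRkW]⟩

theorem matchedVertices_covers (hst : ((IG n m efst esnd hlt).incCap r).Stable μ)
    (hperf : MM.Perfect μ) (t : Fin m) :
    efst t ∈ matchedVertices efst esnd μ ∨ esnd t ∈ matchedVertices efst esnd μ := by
  obtain ⟨p, hp, rfl⟩ := edge_matched hst.1.1 hperf t
  have hmem := mem_matchedVertices_of_edge hst hperf hp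
  rcases p.2 with h | h <;> rw [h] <;> simp [hmem]

theorem add_card_matchedVertices_le_sum (hst : ((IG n m efst esnd hlt).incCap r).Stable μ)
    (hperf : MM.Perfect μ) : m + #(matchedVertices efst esnd μ) ≤ ∑ w, r w := by
  have hload : ∑ p, MM.load μ (.inl p) ≤ ∑ p : VCInc n m efst esnd, (1 + r (.inl p)) :=
    sum_le_sum fun p _ => hst.1.2 (.inl p)
  rw [MM.sum_load_comp_eq_card μ Sum.inl_injective,
    card_matched_incidence (fun t => (edge_matched hst.1.1 hperf t).imp fun _ => And.left)
      (dummy_matched hst.1.1 hperf),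
    sum_add_distrib, sum_const, card_univ, smul_eq_mul, mul_one] at hload
  have hr : ∑ p, r (.inl p) ≤ ∑ w, r w := by
    rw [Fintype.sum_sum_type]
    exact Nat.le_add_right _ _
  omega

section CoverMatching

variable (efst esnd) in
def incEdges (i : Fin n) : Finset (Fin m) := {t | efst t = i ∨ esnd t = i}

variable (efst esnd) in
def coverEnd (S : Finset (Fin n)) (t : Fin m) : Fin n :=
  if efst t ∈ S then efst t else esnd t

theorem coverEnd_mem_edge (S : Finset (Fin n)) (t : Fin m) :
    efst t = coverEnd efst esnd S t ∨ esnd t = coverEnd efst esnd S t := by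
  unfold coverEnd
  split_ifs <;> simp

theorem coverEnd_mem {S : Finset (Fin n)} (hS : ∀ t, efst t ∈ S ∨ esnd t ∈ S) (t : Fin m) :
    coverEnd efst esnd S t ∈ S := by
  unfold coverEnd
  split_ifs with h
  exacts [h, (hS t).resolve_left h]

variable (efst esnd) in
def coverMatching (S : Finset (Fin n)) : VCStu n m efst esnd → Option (VCSch n m efst esnd)
  | .inl t => some (.inl ⟨(coverEnd efst esnd S t, t), coverEnd_mem_edge S t⟩)
  | .inr (.inl p) => some (.inl p)
  | .inr (.inr i) =>
      if hi : i ∈ S ∧ (incEdges efst esnd i).Nonempty then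
        some (.inl ⟨(i, (incEdges efst esnd i).min' hi.2),
          by simpa [incEdges] using (incEdges efst esnd i).min'_mem hi.2⟩)
      else some (.inr i)

variable {S : Finset (Fin n)}

theorem coverMatching_vertex_of_mem {i : Fin n} (hi : i ∈ S) {t : Fin m}
    (ht : efst t = i ∨ esnd t = i) :
    ∃ p : VCInc n m efst esnd, coverMatching efst esnd S (.inr (.inr i)) = some (.inl p) ∧
      p.1.2 ≤ t := by
  have ht' : t ∈ incEdges efst esnd i := by simpa [incEdges] using ht
  exact ⟨_, dif_pos ⟨hi, t, ht'⟩, min'_le _ _ ht'⟩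

theorem coverMatching_vertex_eq_inl {i : Fin n} {p : VCInc n m efst esnd}
    (h : coverMatching efst esnd S (.inr (.inr i)) = some (.inl p)) : i ∈ S ∧ p.1.1 = i := by
  simp only [coverMatching] at h
  split_ifs at h with hi <;> cases h
  exact ⟨hi.1, rfl⟩

theorem coverMatching_eq_inr {u : VCStu n m efst esnd} {i : Fin n}
    (h : coverMatching efst esnd S u = some (.inr i)) : u = .inr (.inr i) := by
  rcases u with t | p | j
  · cases h
  · cases h
  · simp only [coverMatching] at h
    split_ifs at h <;> cases h
    rfl

theorem coverMatching_perfect : MM.Perfect (coverMatching efst esnd S) := by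
  rintro (t | p | i)
  · exact Option.some_ne_none _
  · exact Option.some_ne_none _
  · simp only [coverMatching]
    split_ifs <;> exact Option.some_ne_none _

theorem coverMatching_isMatching :
    ((IG n m efst esnd hlt).incCap r).IsMatching (coverMatching efst esnd S) := by
  rintro (t | p | i) w h
  · cases h
    rcases coverEnd_mem_edge (esnd := esnd) S t with hc | hc <;>
      simp [vcAccS, Subtype.ext_iff, Prod.ext_iff, hc]
  · cases h
    simp [vcAccS]
  · rcases w with p | j
    · simp [vcAccS, (coverMatching_vertex_eq_inl h).2]
    · cases coverMatching_eq_inr h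
      simp [vcAccS]

theorem matchedVertices_coverMatching_subset :
    matchedVertices efst esnd (coverMatching efst esnd S) ⊆ S := by
  intro i hi
  simp only [matchedVertices, mem_filter, mem_univ, true_and] at hi
  obtain ⟨p, hp⟩ := hi
  exact (coverMatching_vertex_eq_inl hp).1

theorem coverMatching_edge_eq_inl (hS : ∀ t, efst t ∈ S ∨ esnd t ∈ S)
    {t : Fin m} {p : VCInc n m efst esnd}
    (h : coverMatching efst esnd S (.inl t) = some (.inl p)) : p.1.1 ∈ S := by
  cases h
  exact coverEnd_mem hS t

theorem vcRkS_vertex_le (i : Fin n) (w : VCSch n m efst esnd) :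
    vcRkS n m efst esnd (.inr (.inr i)) w ≤ m := by
  rcases w with p | j
  · exact p.1.2.isLt.le
  · exact le_rfl

theorem vcRkW_le_two (w : VCSch n m efst esnd) (u : VCStu n m efst esnd) :
    vcRkW n m efst esnd w u ≤ 2 := by
  rcases w with p | j <;> rcases u with t | q | i <;> simp [vcRkW]

theorem one_le_load_coverMatching_incidence (p : VCInc n m efst esnd) :
    1 ≤ MM.load (coverMatching efst esnd S) (.inl p) :=
  MM.one_le_load (u := .inr (.inl p)) rfl

theorem coverMatching_not_blocks_incidence (hS : ∀ t, efst t ∈ S ∨ esnd t ∈ S)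
    (u : VCStu n m efst esnd) (p : VCInc n m efst esnd) :
    ¬ ((IG n m efst esnd hlt).incCap (MM.loadExcess (coverMatching efst esnd S))).Blocks
      (coverMatching efst esnd S) u (.inl p) := by
  intro hb
  have hfull : ((IG n m efst esnd hlt).incCap
      (MM.loadExcess (coverMatching efst esnd S))).q (.inl p) ≤
        MM.load (coverMatching efst esnd S) (.inl p) := by
    have := one_le_load_coverMatching_incidence (S := S) p
    simp only [incCap_q, MM.loadExcess]
    omega
  obtain ⟨hu, hpref, -⟩ := id hb
  simp only [incCap_accW, vcAccW, mem_insert, mem_singleton] at hu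
  rcases hu with rfl | rfl | rfl
  · exact MM.not_prefOut_some_of_rkS_le _ le_rfl hpref
  · by_cases hi : p.1.1 ∈ S
    · obtain ⟨p', hp', hle⟩ := coverMatching_vertex_of_mem hi p.2
      rw [hp'] at hpref
      exact MM.not_prefOut_some_of_rkS_le _ (by simpa [vcRkS] using hle) hpref
    · refine MM.not_blocks_of_le_load hfull (fun u' hu' => ?_) hb
      rcases u' with t | q | j
      · exact absurd (coverMatching_edge_eq_inl hS hu') hi
      · simp [vcRkW]
      · simp [vcRkW]
  · refine MM.not_blocks_of_le_load hfull (fun u' _ => ?_) hb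
    exact vcRkW_le_two (.inl p) u'

theorem coverMatching_stable (hS : ∀ t, efst t ∈ S ∨ esnd t ∈ S) :
    ((IG n m efst esnd hlt).incCap (MM.loadExcess (coverMatching efst esnd S))).Stable
      (coverMatching efst esnd S) := by
  refine ⟨⟨coverMatching_isMatching, fun w => ?_⟩, ?_⟩
  · simp only [incCap_q, MM.loadExcess]
    omega
  rintro u (p | i)
  · exact coverMatching_not_blocks_incidence hS u p
  rintro ⟨hu, hpref, -⟩
  simp only [incCap_accW, vcAccW, mem_singleton] at hu
  subst hu
  obtain ⟨w, hw⟩ :=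
    Option.ne_none_iff_exists'.1 (coverMatching_perfect (S := S) (.inr (.inr i)))
  rw [hw] at hpref
  exact MM.not_prefOut_some_of_rkS_le _ (vcRkS_vertex_le i w) hpref

theorem sum_loadExcess_coverMatching_le :
    ∑ w, MM.loadExcess (coverMatching efst esnd S) w ≤ m + #S := by
  have hvertex (i : Fin n) : MM.loadExcess (coverMatching efst esnd S) (.inr i) = 0 := by
    suffices MM.load (coverMatching efst esnd S) (.inr i) ≤ 1 by
      simp only [MM.loadExcess]
      omega
    rw [MM.load_eq_card_filter, card_le_one]
    intro a ha b hb
    simp only [mem_filter] at ha hb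
    rw [coverMatching_eq_inr ha.2, coverMatching_eq_inr hb.2]
  calc ∑ w, MM.loadExcess (coverMatching efst esnd S) w
      = ∑ p : VCInc n m efst esnd, (MM.load (coverMatching efst esnd S) (.inl p) - 1) := by
        rw [Fintype.sum_sum_type, Fintype.sum_eq_zero _ hvertex, add_zero]
        rfl
    _ = #{u | ∃ p, coverMatching efst esnd S u = some (.inl p)} -
          Fintype.card (VCInc n m efst esnd) := by
        rw [sum_tsub_distrib _ fun p _ => one_le_load_coverMatching_incidence p,
          MM.sum_load_comp_eq_card _ Sum.inl_injective, sum_const, card_univ, smul_eq_mul,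
          mul_one]
    _ = m + #(matchedVertices efst esnd (coverMatching efst esnd S)) := by
        rw [card_matched_incidence (fun t => ⟨_, rfl⟩) (fun p => rfl)]
        omega
    _ ≤ m + #S := by
        grw [card_le_card matchedVertices_coverMatching_subset]

end CoverMatching

end IG

/-- correctness of the reduction in Theorem 3.1: `G` has a
vertex cover of size at most `h` iff a total capacity increase of at most
`m + h` makes `I(G)` admit a stable and perfect matching. -/
theorem statement_6 (hlt : ∀ t, efst t < esnd t) (h : ℕ) :
    (∃ S : Finset (Fin n), S.card ≤ h ∧ ∀ t, efst t ∈ S ∨ esnd t ∈ S) ↔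
    (∃ r : VCSch n m efst esnd → ℕ, (∑ w, r w) ≤ m + h ∧
      ∃ μ : VCStu n m efst esnd → Option (VCSch n m efst esnd),
        ((IG n m efst esnd hlt).incCap r).Stable μ ∧ MM.Perfect μ) := by
  constructor
  · rintro ⟨S, hSh, hS⟩
    exact ⟨MM.loadExcess (IG.coverMatching efst esnd S),
      IG.sum_loadExcess_coverMatching_le.trans (by omega),
      IG.coverMatching efst esnd S, IG.coverMatching_stable hS, IG.coverMatching_perfect⟩
  · rintro ⟨r, hr, μ, hst, hperf⟩
    have hcard := IG.add_card_matchedVertices_le_sum hst hperf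
    exact ⟨IG.matchedVertices efst esnd μ, by omega, IG.matchedVertices_covers hst hperf⟩

end VertexCover
end

section
/- For any MM instance, the minimum of Σ_{u'∈U_as} x_{u'} over all 0/1 vectors (x,y), where x is indexed by U_as and y by pairs (u,w) with u ∈ U_un and w ∈ A(u), subject to (a) Σ_{w∈A(u)} y_{u,w} = 1 for every u ∈ U_un, and (b) x_{u'} ≥ y_{u,w} for every u' ∈ U_as, u ∈ U_un, w ∈ A(u) such that u' prefers w to μ̂(u') and w gives u' higher priority than u, equals min_{v∈V} n_je(v). -/
/-- Lemma 3.5: the optimum of the integer program of Fig. 3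
equals `min_{v ∈ V} n_je(v)`. -/
theorem statement_8 {U W : Type*} [Fintype U] [Fintype W] [DecidableEq U] [DecidableEq W]
    (I : MM U W) (μhat : U → Option W) (hopt : I.StudentOptimal μhat) :
    sInf {s : ℕ | ∃ (x : U → ℕ) (y : U → W → ℕ),
        (∀ u', x u' ≤ 1) ∧ (∀ u w, y u w ≤ 1) ∧
        (∀ u, μhat u = none → (∑ w ∈ I.accS u, y u w) = 1) ∧
        (∀ u' u w, μhat u' ≠ none → μhat u = none → w ∈ I.accS u →
          (∃ w0, μhat u' = some w0 ∧ I.rkS u' w < I.rkS u' w0) →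
          u' ∈ I.accW w → I.rkW w u' < I.rkW w u → y u w ≤ x u') ∧
        (∑ u' ∈ Finset.univ.filter (fun u' => μhat u' ≠ none), x u') = s}
      = sInf {k : ℕ | ∃ v : U → W, I.IsAsgVec μhat v ∧ I.nje μhat v = k} := by
  classical
  have hnje : ∀ v : U → W, I.nje μhat v
      = (Finset.univ.filter (fun u' => u' ∈ I.JEset μhat v)).card := by
    intro v
    rw [MM.nje, Set.ncard_eq_toFinset_card']
    congr 1
    ext u'
    simp
  -- Direction "B ⊆ A" : every nje value is achieved by an IP solution
  have hBA : ∀ v : U → W, I.IsAsgVec μhat v →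
      ∃ (x : U → ℕ) (y : U → W → ℕ),
        (∀ u', x u' ≤ 1) ∧ (∀ u w, y u w ≤ 1) ∧
        (∀ u, μhat u = none → (∑ w ∈ I.accS u, y u w) = 1) ∧
        (∀ u' u w, μhat u' ≠ none → μhat u = none → w ∈ I.accS u →
          (∃ w0, μhat u' = some w0 ∧ I.rkS u' w < I.rkS u' w0) →
          u' ∈ I.accW w → I.rkW w u' < I.rkW w u → y u w ≤ x u') ∧
        (∑ u' ∈ Finset.univ.filter (fun u' => μhat u' ≠ none), x u')
          = I.nje μhat v := by
    intro v hv
    refine ⟨fun u' => if u' ∈ I.JEset μhat v then 1 else 0,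
      fun u w => if μhat u = none ∧ w = v u then 1 else 0, ?_, ?_, ?_, ?_, ?_⟩
    · intro u'; dsimp only; split <;> simp
    · intro u w; dsimp only; split <;> simp
    · intro u hu
      have hcg : ∀ w ∈ I.accS u, (if μhat u = none ∧ w = v u then 1 else 0)
          = (if w = v u then (fun _ : W => (1 : ℕ)) w else 0) := by
        intro w _; simp [hu]
      rw [Finset.sum_congr rfl hcg, Finset.sum_ite_eq' (I.accS u) (v u)]
      simp [hv u hu]
    · intro u' u w hu' hu hw hpref hacc hrk
      by_cases hy : μhat u = none ∧ w = v u
      · have hmem : u' ∈ I.JEset μhat v := by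
          refine ⟨hu', u, hu, w, ?_, hacc, hrk, ?_⟩
          · simp [MM.extend, hu, hy.2]
          · obtain ⟨w0, hw0, hlt⟩ := hpref
            exact Or.inr ⟨w0, by simp [MM.extend, hw0], hlt⟩
        simp [hy, hmem]
      · simp [hy]
    · rw [hnje v]
      rw [Finset.sum_boole]
      rw [Nat.cast_id, Finset.filter_filter]
      congr 1
      ext u'
      simp only [Finset.mem_filter, Finset.mem_univ, true_and]
      exact ⟨fun h => h.2, fun h => ⟨h.1, h⟩⟩
  -- Direction "A → B" : every IP solution yields an assignment vector
  have hAB : ∀ (x : U → ℕ) (y : U → W → ℕ),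
      (∀ u', x u' ≤ 1) → (∀ u w, y u w ≤ 1) →
      (∀ u, μhat u = none → (∑ w ∈ I.accS u, y u w) = 1) →
      (∀ u' u w, μhat u' ≠ none → μhat u = none → w ∈ I.accS u →
          (∃ w0, μhat u' = some w0 ∧ I.rkS u' w < I.rkS u' w0) →
          u' ∈ I.accW w → I.rkW w u' < I.rkW w u → y u w ≤ x u') →
      ∃ v : U → W, I.IsAsgVec μhat v ∧
        I.nje μhat v ≤ ∑ u' ∈ Finset.univ.filter (fun u' => μhat u' ≠ none), x u' := by
    intro x y hx hy hsum hcon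
    have hex : ∀ u : U, ∃ w, w ∈ I.accS u ∧ (μhat u = none → 1 ≤ y u w) := by
      intro u
      by_cases hu : μhat u = none
      · have h1 : (∑ w ∈ I.accS u, y u w) ≠ 0 := by rw [hsum u hu]; norm_num
        obtain ⟨w, hw, hw0⟩ := Finset.exists_ne_zero_of_sum_ne_zero h1
        exact ⟨w, hw, fun _ => Nat.one_le_iff_ne_zero.mpr hw0⟩
      · exact ⟨(I.acc_ne u).choose, (I.acc_ne u).choose_spec, fun h => absurd h hu⟩
    choose v hv1 hv2 using hex
    refine ⟨v, fun u _ => hv1 u, ?_⟩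
    have hsub : ∀ u', u' ∈ I.JEset μhat v → 1 ≤ x u' := by
      intro u' hmem
      obtain ⟨hu', uy, huy, w, hw, hacc, hrk, hpo⟩ := hmem
      have hext : MM.extend μhat v uy = some (v uy) := by simp [MM.extend, huy]
      rw [hext] at hw
      have hwv : w = v uy := (Option.some_inj.mp hw).symm
      obtain ⟨w0, hw0⟩ := Option.ne_none_iff_exists'.mp hu'
      have hpref : ∃ z, μhat u' = some z ∧ I.rkS u' w < I.rkS u' z := by
        rcases hpo with h | ⟨w', hw', hlt⟩
        · simp [MM.extend] at h
        · refine ⟨w0, hw0, ?_⟩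
          have hext' : MM.extend μhat v u' = some w0 := by simp [MM.extend, hw0]
          rw [hext'] at hw'
          rw [Option.some_inj.mp hw']; exact hlt
      have hle := hcon u' uy w hu' huy (hwv ▸ hv1 uy) hpref hacc hrk
      have h1 := hv2 uy huy
      rw [← hwv] at h1
      exact le_trans h1 hle
    rw [hnje v]
    calc (Finset.univ.filter (fun u' => u' ∈ I.JEset μhat v)).card
        = ∑ u' ∈ Finset.univ.filter (fun u' => u' ∈ I.JEset μhat v), 1 := by simp
      _ ≤ ∑ u' ∈ Finset.univ.filter (fun u' => u' ∈ I.JEset μhat v), x u' :=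
          Finset.sum_le_sum (fun u' h => hsub u' (by simpa using h))
      _ ≤ ∑ u' ∈ Finset.univ.filter (fun u' => μhat u' ≠ none), x u' := by
          apply Finset.sum_le_sum_of_subset
          intro u' h
          simp only [Finset.mem_filter, Finset.mem_univ, true_and] at h ⊢
          exact h.1
  -- put everything together
  have hv0 : I.IsAsgVec μhat (fun u => (I.acc_ne u).choose) :=
    fun u _ => (I.acc_ne u).choose_spec
  apply le_antisymm
  · have hBne : {k : ℕ | ∃ v : U → W, I.IsAsgVec μhat v ∧ I.nje μhat v = k}.Nonempty :=
      ⟨_, _, hv0, rfl⟩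
    obtain ⟨v, hv, hveq⟩ := Nat.sInf_mem hBne
    obtain ⟨x, y, h1, h2, h3, h4, h5⟩ := hBA v hv
    exact Nat.sInf_le ⟨x, y, h1, h2, h3, h4, by rw [h5, hveq]⟩
  · obtain ⟨x0, y0, a1, a2, a3, a4, a5⟩ := hBA _ hv0
    have hAne : {s : ℕ | ∃ (x : U → ℕ) (y : U → W → ℕ),
        (∀ u', x u' ≤ 1) ∧ (∀ u w, y u w ≤ 1) ∧
        (∀ u, μhat u = none → (∑ w ∈ I.accS u, y u w) = 1) ∧
        (∀ u' u w, μhat u' ≠ none → μhat u = none → w ∈ I.accS u →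
          (∃ w0, μhat u' = some w0 ∧ I.rkS u' w < I.rkS u' w0) →
          u' ∈ I.accW w → I.rkW w u' < I.rkW w u → y u w ≤ x u') ∧
        (∑ u' ∈ Finset.univ.filter (fun u' => μhat u' ≠ none), x u') = s}.Nonempty :=
      ⟨_, x0, y0, a1, a2, a3, a4, a5⟩
    obtain ⟨x, y, h1, h2, h3, h4, h5⟩ := Nat.sInf_mem hAne
    obtain ⟨v, hv, hle⟩ := hAB x y h1 h2 h3 h4
    exact le_trans (Nat.sInf_le ⟨v, hv, rfl⟩) (h5 ▸ hle)
end

section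
/- For any MM instance, let Δ_un ≥ 1 be the maximum length of the preference list of a student in U_un. For any nonnegative real vectors (x,y), where x is indexed by U_as and y by pairs (u,w) with u ∈ U_un and w ∈ A(u), satisfying (a) Σ_{w∈A(u)} y_{u,w} = 1 for every u ∈ U_un and (b) x_{u'} ≥ y_{u,w} for every u' ∈ U_as, u ∈ U_un, w ∈ A(u) such that u' prefers w to μ̂(u') and w gives u' higher priority than u, there exists an assignment vector v ∈ V with n_je(v) ≤ Δ_un · Σ_{u'∈U_as} x_{u'}. -/
/-- LP rounding, Theorem 3.6: from any feasible fractional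
solution of the LP relaxation one obtains an assignment vector `v` with
`n_je(v) ≤ Δ_un · (Σ_{u' ∈ U_as} x_{u'})`. -/
theorem statement_9 {U W : Type*} [Fintype U] [Fintype W] [DecidableEq U] [DecidableEq W]
    (I : MM U W) (μhat : U → Option W) (hopt : I.StudentOptimal μhat)
    (Δ : ℕ) (hΔ1 : 1 ≤ Δ)
    (hΔ : Δ = (Finset.univ.filter (fun u => μhat u = none)).sup
        (fun u => (I.accS u).card))
    (x : U → ℝ) (y : U → W → ℝ)
    (hx : ∀ u', 0 ≤ x u') (hy : ∀ u w, 0 ≤ y u w)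
    (ha : ∀ u, μhat u = none → (∑ w ∈ I.accS u, y u w) = 1)
    (hb : ∀ u' u w, μhat u' ≠ none → μhat u = none → w ∈ I.accS u →
      (∃ w0, μhat u' = some w0 ∧ I.rkS u' w < I.rkS u' w0) →
      u' ∈ I.accW w → I.rkW w u' < I.rkW w u → y u w ≤ x u') :
    ∃ v : U → W, I.IsAsgVec μhat v ∧
      (I.nje μhat v : ℝ)
        ≤ (Δ : ℝ) * ∑ u' ∈ Finset.univ.filter (fun u' => μhat u' ≠ none), x u' := by
   classical
  have hv : ∀ u : U, ∃ w ∈ I.accS u, ∀ w' ∈ I.accS u, y u w' ≤ y u w := fun u =>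
    (I.accS u).exists_max_image (y u) (I.acc_ne u)
  set v : U → W := fun u => (hv u).choose with hvdef
  have hvmem : ∀ u, v u ∈ I.accS u := fun u => (hv u).choose_spec.1
  have hvmax : ∀ u, ∀ w' ∈ I.accS u, y u w' ≤ y u (v u) := fun u => (hv u).choose_spec.2
  refine ⟨v, fun u _ => hvmem u, ?_⟩
  have hΔpos : (0:ℝ) < Δ := by exact_mod_cast hΔ1
  have hkey : ∀ u, μhat u = none → (1:ℝ)/Δ ≤ y u (v u) := by
    intro u hu
    have hcard : (I.accS u).card ≤ Δ := by
      rw [hΔ]; exact Finset.le_sup (f := fun u => (I.accS u).card) (Finset.mem_filter.2 ⟨Finset.mem_univ _, hu⟩)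
    have h1 : (1:ℝ) ≤ Δ * y u (v u) := by
      calc (1:ℝ) = ∑ w ∈ I.accS u, y u w := (ha u hu).symm
        _ ≤ ∑ _w ∈ I.accS u, y u (v u) := Finset.sum_le_sum (fun w hw => hvmax u w hw)
        _ = (I.accS u).card * y u (v u) := by rw [Finset.sum_const, nsmul_eq_mul]
        _ ≤ Δ * y u (v u) := by
            apply mul_le_mul_of_nonneg_right _ (hy u (v u))
            exact_mod_cast hcard
    rw [div_le_iff₀ hΔpos]
    linarith
  set F := Finset.univ.filter (fun u' => μhat u' ≠ none ∧ (1:ℝ)/Δ ≤ x u') with hF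
  have hsub : I.JEset μhat v ⊆ ↑F := by
    intro u' hu'
    obtain ⟨hne, u, hu, w, hw, hacc, hrk, hpref⟩ := hu'
    have hw' : w = v u := by
      have h2 : MM.extend μhat v u = some (v u) := by simp [MM.extend, hu]
      rw [h2] at hw; exact (Option.some_inj.1 hw).symm
    subst hw'
    obtain ⟨w0, hw0⟩ : ∃ w0, μhat u' = some w0 := Option.ne_none_iff_exists'.1 hne
    have hext : MM.extend μhat v u' = some w0 := by simp [MM.extend, hw0]
    have hrkS : I.rkS u' (v u) < I.rkS u' w0 := by
      rcases hpref with h | ⟨w', hw2, hlt⟩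
      · rw [hext] at h; exact absurd h (by simp)
      · rw [hext] at hw2
        obtain rfl : w0 = w' := Option.some_inj.1 hw2
        exact hlt
    have hxb := hb u' u (v u) hne hu (hvmem u) ⟨w0, hw0, hrkS⟩ hacc hrk
    exact Finset.mem_filter.2 ⟨Finset.mem_univ _, hne, le_trans (hkey u hu) hxb⟩
  have hnje : (I.nje μhat v : ℝ) ≤ F.card := by
    have h3 := Set.ncard_le_ncard hsub (Set.toFinite _)
    rw [Set.ncard_coe_finset] at h3
    exact_mod_cast h3
  have hFsub : F ⊆ Finset.univ.filter (fun u' => μhat u' ≠ none) := by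
    intro a ha'
    rw [hF, Finset.mem_filter] at ha'
    exact Finset.mem_filter.2 ⟨Finset.mem_univ _, ha'.2.1⟩
  have hsum : (F.card : ℝ) * (1/Δ) ≤ ∑ u' ∈ Finset.univ.filter (fun u' => μhat u' ≠ none), x u' := by
    calc (F.card : ℝ) * (1/Δ) = ∑ _u' ∈ F, (1:ℝ)/Δ := by
          rw [Finset.sum_const, nsmul_eq_mul]
      _ ≤ ∑ u' ∈ F, x u' := Finset.sum_le_sum (fun a ha' => (Finset.mem_filter.1 ha').2.2)
      _ ≤ ∑ u' ∈ Finset.univ.filter (fun u' => μhat u' ≠ none), x u' :=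
          Finset.sum_le_sum_of_subset_of_nonneg hFsub (fun a _ _ => hx a)
  calc (I.nje μhat v : ℝ) ≤ F.card := hnje
    _ ≤ (Δ : ℝ) * ∑ u' ∈ Finset.univ.filter (fun u' => μhat u' ≠ none), x u' := by
        have := mul_le_mul_of_nonneg_left hsum (le_of_lt hΔpos)
        rw [mul_comm (F.card : ℝ) (1/Δ), ← mul_assoc] at this
        field_simp at this
        linarith
end

section
/- For any MM instance, for each u ∈ U_un and w ∈ A(u) let env(u,w) be the number of students u' ∈ U_as such that u' prefers w to μ̂(u') and w gives u' higher priority than u. Then (i) for every u ∈ U_un, min_{w∈A(u)} env(u,w) ≤ min_{v∈V} n_je(v); and (ii) every assignment vector v* that chooses for each u ∈ U_un a school minimizing env(u,·) satisfies n_je(v*) ≤ |U_un| · min_{v∈V} n_je(v), and hence n_je(v*) + |U_un| ≤ |U_un| · (min_{v∈V} n_je(v) + |U_un|) whenever U_un is nonempty. -/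
/-- greedy `|U_un|`-approximation, Theorem 3.7. -/
theorem statement_10 {U W : Type*} [Fintype U] [Fintype W] [DecidableEq U] [DecidableEq W]
    (I : MM U W) (μhat : U → Option W) (hopt : I.StudentOptimal μhat)
    (env : U → W → ℕ)
    (henv : ∀ u w, env u w = {u' : U | μhat u' ≠ none ∧
        (∃ w0, μhat u' = some w0 ∧ I.rkS u' w < I.rkS u' w0) ∧
        u' ∈ I.accW w ∧ I.rkW w u' < I.rkW w u}.ncard) :
    (∀ u, μhat u = none →
        sInf {e : ℕ | ∃ w ∈ I.accS u, env u w = e}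
          ≤ sInf {k : ℕ | ∃ v : U → W, I.IsAsgVec μhat v ∧ I.nje μhat v = k}) ∧
    (∀ vstar : U → W, I.IsAsgVec μhat vstar →
      (∀ u, μhat u = none → ∀ w ∈ I.accS u, env u (vstar u) ≤ env u w) →
      I.nje μhat vstar
          ≤ (MM.unmatchedSet μhat).ncard *
            sInf {k : ℕ | ∃ v : U → W, I.IsAsgVec μhat v ∧ I.nje μhat v = k} ∧
        ((MM.unmatchedSet μhat).Nonempty →
          I.nje μhat vstar + (MM.unmatchedSet μhat).ncard
            ≤ (MM.unmatchedSet μhat).ncard *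
              (sInf {k : ℕ | ∃ v : U → W, I.IsAsgVec μhat v ∧ I.nje μhat v = k}
                + (MM.unmatchedSet μhat).ncard))) := by

  classical
  set Mset := {k : ℕ | ∃ v : U → W, I.IsAsgVec μhat v ∧ I.nje μhat v = k} with hMset
  have hMne : Mset.Nonempty := by
    refine ⟨I.nje μhat (fun u => (I.acc_ne u).choose), fun u => (I.acc_ne u).choose, ?_, rfl⟩
    intro u _
    exact (I.acc_ne u).choose_spec
  -- key: for any assignment vector v and unmatched u, env u (v u) ≤ nje v
  have hkey : ∀ v : U → W, I.IsAsgVec μhat v → ∀ u, μhat u = none →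
      env u (v u) ≤ I.nje μhat v := by
    intro v hv u hu
    rw [henv]
    apply Set.ncard_le_ncard _ (Set.toFinite _)
    rintro x ⟨hx1, ⟨w0, hw0, hlt⟩, hacc, hrk⟩
    refine ⟨hx1, u, hu, v u, ?_, hacc, hrk, ?_⟩
    · simp [MM.extend, hu]
    · refine Or.inr ⟨w0, ?_, hlt⟩
      simp [MM.extend, hw0]
  constructor
  · intro u hu
    refine le_csInf hMne ?_
    rintro k ⟨v, hv, rfl⟩
    exact le_trans (Nat.sInf_le ⟨v u, hv u hu, rfl⟩) (hkey v hv u hu)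
  · intro vstar hvs hmin
    set M := sInf Mset with hM
    obtain ⟨v0, hv0, hv0M⟩ := Nat.sInf_mem hMne
    have hbM : ∀ u, μhat u = none → env u (vstar u) ≤ M := fun u hu =>
      le_trans (hmin u hu (v0 u) (hv0 u hu)) ((hkey v0 hv0 u hu).trans (le_of_eq hv0M))
    set Sfin : Finset U := Finset.univ.filter (fun u => μhat u = none) with hSfin
    have hScoe : MM.unmatchedSet μhat = ↑Sfin := by
      ext x; simp [MM.unmatchedSet, hSfin]
    have hSn : (MM.unmatchedSet μhat).ncard = Sfin.card := by
      rw [hScoe, Set.ncard_coe_finset]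
    set Efin : U → Finset U := fun y => Finset.univ.filter (fun u' => μhat u' ≠ none ∧
        (∃ w0, μhat u' = some w0 ∧ I.rkS u' (vstar y) < I.rkS u' w0) ∧
        u' ∈ I.accW (vstar y) ∧ I.rkW (vstar y) u' < I.rkW (vstar y) y) with hEfin
    have hEcard : ∀ y, (Efin y).card = env y (vstar y) := by
      intro y
      rw [henv, ← Set.ncard_coe_finset]
      congr 1
      ext x; simp [hEfin]
    have hsub : I.JEset μhat vstar ⊆ ↑(Sfin.biUnion Efin) := by
      rintro x ⟨hx1, y, hy, w, hw, hacc, hrk, hpref⟩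
      have hwy : w = vstar y := by
        simpa [MM.extend, hy] using hw.symm
      obtain ⟨w0, hw0⟩ : ∃ w0, μhat x = some w0 := Option.ne_none_iff_exists'.mp hx1
      have hx2 : I.rkS x w < I.rkS x w0 := by
        rcases hpref with h | ⟨w', hw', hlt⟩
        · simp [MM.extend] at h
        · have : w' = w0 := by
            simp [MM.extend, hw0] at hw'
            exact hw'.symm
          exact this ▸ hlt
      simp only [Finset.coe_biUnion, Set.mem_iUnion]
      refine ⟨y, by simp [hSfin, hy], ?_⟩
      subst hwy
      simp only [hEfin, Finset.mem_coe, Finset.mem_filter, Finset.mem_univ, true_and]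
      exact ⟨hx1, ⟨w0, hw0, hx2⟩, hacc, hrk⟩
    have h1 : I.nje μhat vstar ≤ Sfin.card * M := by
      calc I.nje μhat vstar ≤ (↑(Sfin.biUnion Efin) : Set U).ncard :=
            Set.ncard_le_ncard hsub (Set.toFinite _)
        _ = (Sfin.biUnion Efin).card := Set.ncard_coe_finset _
        _ ≤ Sfin.card * M := by
            apply Finset.card_biUnion_le_card_mul
            intro y hy
            rw [hEcard]
            exact hbM y (by simpa [hSfin] using hy)
    refine ⟨by rw [hSn]; exact h1, ?_⟩
    intro hne
    have hn1 : 1 ≤ (MM.unmatchedSet μhat).ncard :=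
      (Set.ncard_pos (Set.toFinite _)).mpr hne
    have := hSn ▸ h1
    nlinarith [this, hn1]
end
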